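/- arXiv:math/0112284 — 7 statements merged into one kernel-verified Lean document; each statement's English description precedes it below -/
import Mathlib

section
/- For every 1 ≤ i ≤ d one has t_k^* a_i^{(i)} = 0 for all k ≠ i, a_i^{(i)} t_k = 0 for all k < i, and P_j a_i^{(i)} = a_i^{(i)} for all j < i. -/
/-!
For `k ≠ i`, `tₖ*` kills `tᵢ`, hence every term of the series for `Tᵢ²`, so `tₖ* Tᵢ² = 0`;
since `Tᵢ` is self-adjoint, the C*-identity `‖x‖² = ‖x x*‖` applied to `x = tₖ* Tᵢ` gives
`tₖ* Tᵢ = 0`, hence `tₖ* aᵢ⁽ⁱ⁾ = 0`. The other two claims follow from `tᵢ tₖ = 0` for `k < i`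
and `Pⱼ = 1 - ∑_{k ≤ j} tₖ tₖ*`.
-/

open Finset

theorem HasSum.mul_left_eq_zero {ι R : Type*} [NonUnitalNonAssocSemiring R] [TopologicalSpace R]
    [IsTopologicalSemiring R] [T2Space R] {f : ι → R} {s : R} (hf : HasSum f s) {x : R}
    (h : ∀ n, x * f n = 0) : x * s = 0 := by
  have hx := hf.mul_left x
  simp only [h] at hx
  exact hx.unique hasSum_zero

theorem CStarRing.mul_eq_zero_of_mul_sq_eq_zero {A : Type*} [NormedRing A] [StarRing A]
    [CStarRing A] {x y : A} (hy : IsSelfAdjoint y) (h : x * y ^ 2 = 0) : x * y = 0 := by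
  refine (CStarRing.mul_star_self_eq_zero_iff _).mp ?_
  rw [star_mul, hy.star_eq, mul_assoc, ← mul_assoc y, ← sq, ← mul_assoc, h, zero_mul]

theorem one_sub_sum_mul_star_mul_eq_self {ι R : Type*} [Ring R] [StarRing R] (s : Finset ι)
    (t : ι → R) {x : R} (h : ∀ k ∈ s, star (t k) * x = 0) :
    (1 - ∑ k ∈ s, t k * star (t k)) * x = x := by
  rw [sub_mul, one_mul, sum_mul, sum_eq_zero fun k hk => by rw [mul_assoc, h k hk, mul_zero],
    sub_zero]

theorem a_ii_orthogonality_general {A : Type*} [CStarAlgebra A] [PartialOrder A] [StarOrderedRing A]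
    {d : ℕ} {μ : ℝ}
    (t T P : ℕ → A) (a : ℕ → ℕ → A)
    (rel1 : ∀ i j, 1 ≤ i → i ≤ d → 1 ≤ j → j ≤ d → i ≠ j → star (t i) * t j = 0)
    (rel3 : ∀ i j, 1 ≤ i → i < j → j ≤ d → t j * t i = 0)
    (hP : ∀ j, P j = 1 - ∑ k ∈ Finset.Icc 1 j, t k * star (t k))
    (hTpos : ∀ i, 1 ≤ i → i ≤ d → 0 ≤ T i)
    (hTsq : ∀ i, 1 ≤ i → i ≤ d →
      HasSum (fun n : ℕ => μ ^ (2 * n) • ((t i) ^ (n + 1) * star ((t i) ^ (n + 1))))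
        (T i ^ 2))
    (haii : ∀ i, 1 ≤ i → i ≤ d → a i i = T i * t i) :
    ∀ i, 1 ≤ i → i ≤ d →
      (∀ k, 1 ≤ k → k ≤ d → k ≠ i → star (t k) * a i i = 0) ∧
      (∀ k, 1 ≤ k → k < i → a i i * t k = 0) ∧
      (∀ j, j < i → P j * a i i = a i i) := by
  intro i hi1 hi2
  have star_mul_T : ∀ k, 1 ≤ k → k ≤ d → k ≠ i → star (t k) * T i = 0 := by
    intro k hk1 hk2 hki
    refine CStarRing.mul_eq_zero_of_mul_sq_eq_zero (.of_nonneg (hTpos i hi1 hi2))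
      ((hTsq i hi1 hi2).mul_left_eq_zero fun n => ?_)
    rw [mul_smul_comm, ← mul_assoc, pow_succ', ← mul_assoc, rel1 k i hk1 hk2 hi1 hi2 hki,
      zero_mul, zero_mul, smul_zero]
  have star_mul_a : ∀ k, 1 ≤ k → k ≤ d → k ≠ i → star (t k) * a i i = 0 := by
    intro k hk1 hk2 hki
    rw [haii i hi1 hi2, ← mul_assoc, star_mul_T k hk1 hk2 hki, zero_mul]
  refine ⟨star_mul_a, fun k hk1 hki => ?_, fun j hji => ?_⟩
  · rw [haii i hi1 hi2, mul_assoc, rel3 k i hk1 hki hi2, mul_zero]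
  · rw [hP j]
    refine one_sub_sum_mul_star_mul_eq_self _ _ fun k hk => ?_
    rw [mem_Icc] at hk
    exact star_mul_a k hk.1 (by omega) (by omega)

/-- For `1 ≤ i ≤ d`: `tₖ* aᵢ⁽ⁱ⁾ = 0` for all `k ≠ i`,
`aᵢ⁽ⁱ⁾ tₖ = 0` for all `k < i`, and `P j * aᵢ⁽ⁱ⁾ = aᵢ⁽ⁱ⁾` for all `j < i`. -/
theorem a_ii_orthogonality {A : Type*} [CStarAlgebra A] [PartialOrder A] [StarOrderedRing A]
    {d : ℕ} (hd : 0 < d) {μ : ℝ} (hμ₁ : -1 < μ) (hμ₂ : μ < 1)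
    (t T P : ℕ → A) (a : ℕ → ℕ → A)
    (rel1 : ∀ i j, 1 ≤ i → i ≤ d → 1 ≤ j → j ≤ d → i ≠ j → star (t i) * t j = 0)
    (rel2 : ∀ i, 1 ≤ i → i ≤ d →
      star (t i) * t i = 1 - ∑ k ∈ Finset.Ico 1 i, t k * star (t k))
    (rel3 : ∀ i j, 1 ≤ i → i < j → j ≤ d → t j * t i = 0)
    (hP : ∀ j, P j = 1 - ∑ k ∈ Finset.Icc 1 j, t k * star (t k))
    (hTpos : ∀ i, 1 ≤ i → i ≤ d → 0 ≤ T i)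
    (hTsq : ∀ i, 1 ≤ i → i ≤ d →
      HasSum (fun n : ℕ => μ ^ (2 * n) • ((t i) ^ (n + 1) * star ((t i) ^ (n + 1))))
        (T i ^ 2))
    (haii : ∀ i, 1 ≤ i → i ≤ d → a i i = T i * t i)
    (haij : ∀ i j, 1 ≤ j → j < i → i ≤ d →
      HasSum (fun n : ℕ => μ ^ n • ((t j) ^ n * a i (j + 1) * star ((t j) ^ n)))
        (a i j)) :
    ∀ i, 1 ≤ i → i ≤ d →
      (∀ k, 1 ≤ k → k ≤ d → k ≠ i → star (t k) * a i i = 0) ∧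
      (∀ k, 1 ≤ k → k < i → a i i * t k = 0) ∧
      (∀ j, j < i → P j * a i i = a i i) :=
  a_ii_orthogonality_general t T P a rel1 rel3 hP hTpos hTsq haii
end

section
/- (Proposition 3 of the paper) For every 1 ≤ i ≤ d and every 1 ≤ j ≤ i one has (a_i^{(j)})^* a_i^{(j)} = P_{j−1} + μ^2 a_i^{(j)} (a_i^{(j)})^* − (1 − μ^2) ∑_{j ≤ k < i} a_k^{(j)} (a_k^{(j)})^*. -/
set_option maxHeartbeats 3200000 in
/-- **Proposition 3.** For `1 ≤ j ≤ i ≤ d`,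
`(aᵢ⁽ʲ⁾)* aᵢ⁽ʲ⁾ = P_{j-1} + μ² aᵢ⁽ʲ⁾ (aᵢ⁽ʲ⁾)* - (1-μ²) ∑_{j ≤ k < i} aₖ⁽ʲ⁾ (aₖ⁽ʲ⁾)*`. -/
theorem a_star_a_proposition3 {A : Type*} [CStarAlgebra A] [PartialOrder A] [StarOrderedRing A]
    {d : ℕ} (hd : 0 < d) {μ : ℝ} (hμ₁ : -1 < μ) (hμ₂ : μ < 1)
    (t T P : ℕ → A) (a : ℕ → ℕ → A)
    (rel1 : ∀ i j, 1 ≤ i → i ≤ d → 1 ≤ j → j ≤ d → i ≠ j → star (t i) * t j = 0)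
    (rel2 : ∀ i, 1 ≤ i → i ≤ d →
      star (t i) * t i = 1 - ∑ k ∈ Finset.Ico 1 i, t k * star (t k))
    (rel3 : ∀ i j, 1 ≤ i → i < j → j ≤ d → t j * t i = 0)
    (hP : ∀ j, P j = 1 - ∑ k ∈ Finset.Icc 1 j, t k * star (t k))
    (hTpos : ∀ i, 1 ≤ i → i ≤ d → 0 ≤ T i)
    (hTsq : ∀ i, 1 ≤ i → i ≤ d →
      HasSum (fun n : ℕ => μ ^ (2 * n) • ((t i) ^ (n + 1) * star ((t i) ^ (n + 1))))
        (T i ^ 2))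
    (haii : ∀ i, 1 ≤ i → i ≤ d → a i i = T i * t i)
    (haij : ∀ i j, 1 ≤ j → j < i → i ≤ d →
      HasSum (fun n : ℕ => μ ^ n • ((t j) ^ n * a i (j + 1) * star ((t j) ^ n)))
        (a i j)) :
    ∀ i j, 1 ≤ j → j ≤ i → i ≤ d →
      star (a i j) * a i j =
        P (j - 1) + μ ^ 2 • (a i j * star (a i j)) -
          (1 - μ ^ 2) • ∑ k ∈ Finset.Ico j i, a k j * star (a k j) := by
  have hμsq : μ ^ 2 < 1 := by nlinarith
  -- `star (t k) * t k = P (k-1)`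
  have hstt : ∀ k, 1 ≤ k → k ≤ d → star (t k) * t k = P (k - 1) := by
    intro k h1 h2
    rw [rel2 k h1 h2, hP]
    have e : Finset.Icc 1 (k - 1) = Finset.Ico 1 k := by
      rw [← Finset.Ico_add_one_right_eq_Icc]; congr 1; omega
    rw [e]
  -- `P j * t k = t k` and friends, for `j < k ≤ d`
  have hPt : ∀ j k, j < k → k ≤ d → P j * t k = t k := by
    intro j k hjk hkd
    rw [hP, sub_mul, one_mul, Finset.sum_mul, Finset.sum_eq_zero, sub_zero]
    intro l hl
    simp only [Finset.mem_Icc] at hl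
    rw [mul_assoc, rel1 l k hl.1 (by omega) (by omega) hkd (by omega), mul_zero]
  have htP : ∀ j k, j < k → k ≤ d → t k * P j = t k := by
    intro j k hjk hkd
    rw [hP, mul_sub, mul_one, Finset.mul_sum, Finset.sum_eq_zero, sub_zero]
    intro l hl
    simp only [Finset.mem_Icc] at hl
    rw [← mul_assoc, rel3 l k hl.1 (by omega) hkd, zero_mul]
  have hPsa : ∀ j, star (P j) = P j := by
    intro j
    rw [hP]
    simp [star_sub, star_sum, star_mul]
  have hPst : ∀ j k, j < k → k ≤ d → P j * star (t k) = star (t k) := by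
    intro j k h1 h2
    have := congrArg star (htP j k h1 h2)
    rwa [star_mul, hPsa] at this
  have hstP : ∀ j k, j < k → k ≤ d → star (t k) * P j = star (t k) := by
    intro j k h1 h2
    have := congrArg star (hPt j k h1 h2)
    rwa [star_mul, hPsa] at this
  -- `P j` is idempotent
  have hPP : ∀ j, j ≤ d → P j * P j = P j := by
    intro j hjd
    have hQ : (∑ k ∈ Finset.Icc 1 j, t k * star (t k)) * (∑ k ∈ Finset.Icc 1 j, t k * star (t k))
        = ∑ k ∈ Finset.Icc 1 j, t k * star (t k) := by
      rw [Finset.sum_mul_sum]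
      apply Finset.sum_congr rfl
      intro k hk
      simp only [Finset.mem_Icc] at hk
      rw [Finset.sum_eq_single k]
      · calc t k * star (t k) * (t k * star (t k))
            = t k * (star (t k) * t k) * star (t k) := by noncomm_ring
          _ = t k * P (k - 1) * star (t k) := by rw [hstt k hk.1 (by omega)]
          _ = t k * star (t k) := by rw [htP (k - 1) k (by omega) (by omega)]
      · intro l hl hlk
        simp only [Finset.mem_Icc] at hl
        calc t k * star (t k) * (t l * star (t l))
            = t k * (star (t k) * t l) * star (t l) := by noncomm_ring
          _ = 0 := by
              rw [rel1 k l hk.1 (by omega) hl.1 (by omega) (by omega), mul_zero, zero_mul]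
      · intro hk'; exact absurd (Finset.mem_Icc.2 hk) hk'
    rw [hP]
    calc (1 - ∑ k ∈ Finset.Icc 1 j, t k * star (t k)) * (1 - ∑ k ∈ Finset.Icc 1 j, t k * star (t k))
        = 1 - (∑ k ∈ Finset.Icc 1 j, t k * star (t k)) - (∑ k ∈ Finset.Icc 1 j, t k * star (t k))
          + (∑ k ∈ Finset.Icc 1 j, t k * star (t k)) * (∑ k ∈ Finset.Icc 1 j, t k * star (t k)) := by
          noncomm_ring
      _ = 1 - ∑ k ∈ Finset.Icc 1 j, t k * star (t k) := by rw [hQ]; abel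
  have hnormP : ∀ j, j ≤ d → ‖P j‖ ≤ 1 := by
    intro j hjd
    have h1 : ‖P j‖ * ‖P j‖ = ‖P j‖ := by
      calc ‖P j‖ * ‖P j‖ = ‖star (P j) * P j‖ := CStarRing.norm_star_mul_self.symm
        _ = ‖P j‖ := by rw [hPsa, hPP j hjd]
    nlinarith [norm_nonneg (P j)]
  have hnormt : ∀ k, 1 ≤ k → k ≤ d → ‖t k‖ ≤ 1 := by
    intro k h1 h2
    have h3 : ‖t k‖ * ‖t k‖ = ‖P (k - 1)‖ := by
      rw [← CStarRing.norm_star_mul_self, hstt k h1 h2]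
    nlinarith [norm_nonneg (t k), hnormP (k - 1) (by omega)]
  -- basic power identities
  have hstpow : ∀ i n, 1 ≤ i → i ≤ d → star (t i) * t i ^ (n + 1) = P (i - 1) * t i ^ n := by
    intro i n h1 h2
    rw [pow_succ' (t i) n, ← mul_assoc, hstt i h1 h2]
  have hPpow : ∀ i n, 1 ≤ i → i ≤ d → P (i - 1) * t i ^ (n + 1) = t i ^ (n + 1) := by
    intro i n h1 h2
    rw [pow_succ' (t i) n, ← mul_assoc, hPt (i - 1) i (by omega) h2, ← pow_succ']
  -- T facts
  have hTsa : ∀ i, 1 ≤ i → i ≤ d → star (T i) = T i := fun i h1 h2 =>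
    (IsSelfAdjoint.of_nonneg (hTpos i h1 h2)).star_eq
  have hT2t : ∀ i k, 1 ≤ k → k < i → i ≤ d →
      star (t k) * T i ^ 2 = 0 ∧ T i ^ 2 * t k = 0 := by
    intro i k hk1 hki hid
    have hi1 : 1 ≤ i := by omega
    constructor
    · have h := (hTsq i hi1 hid).mul_left (star (t k))
      have hz : (fun n : ℕ => star (t k) * (μ ^ (2 * n) • (t i ^ (n + 1) * star (t i ^ (n + 1)))))
          = fun _ => (0 : A) := by
        funext n
        rw [mul_smul_comm, pow_succ' (t i) n, ← mul_assoc, ← mul_assoc,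
          rel1 k i hk1 (by omega) hi1 hid (by omega), zero_mul, zero_mul, smul_zero]
      rw [hz] at h
      exact h.unique hasSum_zero
    · have h := (hTsq i hi1 hid).mul_right (t k)
      have hz : (fun n : ℕ => (μ ^ (2 * n) • (t i ^ (n + 1) * star (t i ^ (n + 1)))) * t k)
          = fun _ => (0 : A) := by
        funext n
        rw [smul_mul_assoc, pow_succ' (t i) n, star_mul, mul_assoc, mul_assoc, mul_assoc,
          rel1 i k hi1 hid hk1 (by omega) (by omega), mul_zero, mul_zero, mul_zero, smul_zero]
      rw [hz] at h
      exact h.unique hasSum_zero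
  have hTt : ∀ i k, 1 ≤ k → k < i → i ≤ d → star (t k) * T i = 0 ∧ T i * t k = 0 := by
    intro i k hk1 hki hid
    obtain ⟨h1, h2⟩ := hT2t i k hk1 hki hid
    have hts := hTsa i (by omega) hid
    constructor
    · have h3 : (star (t k) * T i) * star (star (t k) * T i) = 0 := by
        rw [star_mul, star_star, hts]
        calc star (t k) * T i * (T i * t k) = star (t k) * T i ^ 2 * t k := by
              rw [sq]; noncomm_ring
          _ = 0 := by rw [h1, zero_mul]
      exact (CStarRing.mul_star_self_eq_zero_iff _).1 h3
    · have h3 : star (T i * t k) * (T i * t k) = 0 := by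
        rw [star_mul, hts]
        calc star (t k) * T i * (T i * t k) = star (t k) * (T i ^ 2 * t k) := by
              rw [sq]; noncomm_ring
          _ = 0 := by rw [h2, mul_zero]
      exact (CStarRing.star_mul_self_eq_zero_iff _).1 h3
  -- shift identity for T j ^ 2
  have hTshift : ∀ j, 1 ≤ j → j ≤ d →
      μ ^ 2 • (t j * T j ^ 2 * star (t j)) = T j ^ 2 - t j * star (t j) := by
    intro j h1 h2
    set f : ℕ → A := fun n => μ ^ (2 * n) • (t j ^ (n + 1) * star (t j ^ (n + 1))) with hf
    have h := hTsq j h1 h2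
    have hmap : HasSum (fun n => f (n + 1)) (μ ^ 2 • (t j * T j ^ 2 * star (t j))) := by
      have h2' := ((h.mul_left (t j)).mul_right (star (t j))).const_smul (μ ^ 2)
      convert h2' using 2 with n
      show f (n + 1) = μ ^ 2 • (t j * f n * star (t j))
      simp only [hf]
      rw [mul_smul_comm, smul_mul_assoc, smul_smul]
      congr 1
      · rw [show 2 * (n + 1) = 2 + 2 * n by ring, pow_add]
      · rw [pow_succ' (t j) (n + 1), star_mul]
        noncomm_ring
      rfl
    have h3 := h.unique ((hasSum_nat_add_iff 1).1 hmap)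
    rw [Finset.sum_range_one] at h3
    have hf0 : μ ^ (2 * 0) • (t j ^ (0 + 1) * star (t j ^ (0 + 1))) = t j * star (t j) := by
      norm_num
    rw [hf0] at h3
    exact eq_sub_of_add_eq h3.symm
  -- `star (t i) * T i ^ 2 * t i = P (i-1) + μ² T i ^ 2`
  have hbase : ∀ i, 1 ≤ i → i ≤ d →
      star (t i) * T i ^ 2 * t i = P (i - 1) + μ ^ 2 • T i ^ 2 := by
    intro i h1 h2
    set f : ℕ → A := fun n => μ ^ (2 * n) • (t i ^ (n + 1) * star (t i ^ (n + 1))) with hf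
    have h := hTsq i h1 h2
    set G : ℕ → A := fun n => star (t i) * f n * t i with hG
    have hmapG : HasSum G (star (t i) * T i ^ 2 * t i) := (h.mul_left _).mul_right _
    have hshift : (fun n => G (n + 1)) = fun n => μ ^ 2 • f n := by
      funext n
      show star (t i) * (μ ^ (2 * (n + 1)) • (t i ^ (n + 2) * star (t i ^ (n + 2)))) * t i
          = μ ^ 2 • (μ ^ (2 * n) • (t i ^ (n + 1) * star (t i ^ (n + 1))))
      rw [mul_smul_comm, smul_mul_assoc, smul_smul]
      congr 1
      · rw [show 2 * (n + 1) = 2 + 2 * n by ring, pow_add]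
      · have e1 : star (t i) * t i ^ (n + 2) = t i ^ (n + 1) := by
          rw [hstpow i (n + 1) h1 h2, hPpow i n h1 h2]
        have e2 : star (t i ^ (n + 2)) * t i = star (t i ^ (n + 1)) := by
          have := congrArg star e1
          rwa [star_mul, star_star] at this
        calc star (t i) * (t i ^ (n + 2) * star (t i ^ (n + 2))) * t i
            = (star (t i) * t i ^ (n + 2)) * (star (t i ^ (n + 2)) * t i) := by noncomm_ring
          _ = t i ^ (n + 1) * star (t i ^ (n + 1)) := by rw [e1, e2]
    have hG0 : G 0 = P (i - 1) := by
      simp only [hG, hf, mul_zero, pow_zero, one_smul, zero_add, pow_one]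
      calc star (t i) * (t i * star (t i)) * t i
          = (star (t i) * t i) * (star (t i) * t i) := by noncomm_ring
        _ = P (i - 1) := by rw [hstt i h1 h2, hPP (i - 1) (by omega)]
    have hmapG' : HasSum (fun n => G (n + 1)) (μ ^ 2 • T i ^ 2) := by
      rw [hshift]; exact h.const_smul (μ ^ 2)
    have h3 := hmapG.unique ((hasSum_nat_add_iff 1).1 hmapG')
    rw [Finset.sum_range_one, hG0] at h3
    rw [h3]; abel
  -- `T i * (t i * star (t i)) = T i`
  have hTtt : ∀ i, 1 ≤ i → i ≤ d → T i * (t i * star (t i)) = T i := by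
    intro i h1 h2
    have h := hTsq i h1 h2
    have hR := h.mul_right (t i * star (t i))
    have hfun : (fun n : ℕ => (μ ^ (2 * n) • (t i ^ (n + 1) * star (t i ^ (n + 1)))) * (t i * star (t i)))
        = fun n : ℕ => μ ^ (2 * n) • (t i ^ (n + 1) * star (t i ^ (n + 1))) := by
      funext n
      rw [smul_mul_assoc]
      congr 1
      have e : star (t i ^ (n + 1)) * t i = star (t i ^ n) * P (i - 1) := by
        have := congrArg star (hstpow i n h1 h2)
        rwa [star_mul, star_star, star_mul, hPsa] at this
      calc t i ^ (n + 1) * star (t i ^ (n + 1)) * (t i * star (t i))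
          = t i ^ (n + 1) * ((star (t i ^ (n + 1)) * t i) * star (t i)) := by noncomm_ring
        _ = t i ^ (n + 1) * (star (t i ^ n) * (P (i - 1) * star (t i))) := by
            rw [e, mul_assoc]
        _ = t i ^ (n + 1) * (star (t i ^ n) * star (t i)) := by
            rw [hPst (i - 1) i (by omega) h2]
        _ = t i ^ (n + 1) * star (t i ^ (n + 1)) := by rw [← star_mul, ← pow_succ']
    rw [hfun] at hR
    have hT2tt : T i ^ 2 * (t i * star (t i)) = T i ^ 2 := hR.unique h
    have hQsa : star ((1 : A) - t i * star (t i)) = 1 - t i * star (t i) := by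
      simp [star_sub, star_mul]
    have hz : star (T i * (1 - t i * star (t i))) * (T i * (1 - t i * star (t i))) = 0 := by
      rw [star_mul, hQsa, hTsa i h1 h2]
      calc (1 - t i * star (t i)) * T i * (T i * (1 - t i * star (t i)))
          = (1 - t i * star (t i)) * (T i ^ 2 * (1 - t i * star (t i))) := by
            rw [sq]; noncomm_ring
        _ = 0 := by rw [mul_sub, mul_one, hT2tt, sub_self, mul_zero]
    have hTQ0 : T i * (1 - t i * star (t i)) = 0 := (CStarRing.star_mul_self_eq_zero_iff _).1 hz
    rw [mul_sub, mul_one, sub_eq_zero] at hTQ0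
    exact hTQ0.symm
  have haiisq : ∀ i, 1 ≤ i → i ≤ d → a i i * star (a i i) = T i ^ 2 := by
    intro i h1 h2
    rw [haii i h1 h2, star_mul, hTsa i h1 h2]
    calc T i * t i * (star (t i) * T i) = (T i * (t i * star (t i))) * T i := by noncomm_ring
      _ = T i * T i := by rw [hTtt i h1 h2]
      _ = T i ^ 2 := (sq _).symm
  -- recursion for `a i j`
  have hrec : ∀ i j, 1 ≤ j → j < i → i ≤ d →
      a i j = a i (j + 1) + μ • (t j * a i j * star (t j)) := by
    intro i j h1 hji hid
    have h := haij i j h1 hji hid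
    set f : ℕ → A := fun n => μ ^ n • (t j ^ n * a i (j + 1) * star (t j ^ n)) with hf
    have hmap : HasSum (fun n => f (n + 1)) (μ • (t j * a i j * star (t j))) := by
      have h2 := ((h.mul_left (t j)).mul_right (star (t j))).const_smul μ
      convert h2 using 2 with n
      show f (n + 1) = μ • (t j * f n * star (t j))
      simp only [hf]
      rw [mul_smul_comm, smul_mul_assoc, smul_smul]
      congr 1
      · rw [pow_succ']
      · rw [pow_succ' (t j) n, star_mul]
        noncomm_ring
      rfl
    have h3 := h.unique ((hasSum_nat_add_iff 1).1 hmap)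
    rw [Finset.sum_range_one] at h3
    have hf0 : f 0 = a i (j + 1) := by simp [hf]
    rw [hf0] at h3
    exact h3.trans (add_comm _ _)
  -- annihilation lemma
  have hann : ∀ n i l k, i = l + n → 1 ≤ k → k < l → i ≤ d →
      star (t k) * a i l = 0 ∧ a i l * t k = 0 := by
    intro n
    induction n with
    | zero =>
      intro i l k hil hk1 hkl hid
      obtain rfl : i = l := by omega
      rw [haii i (by omega) hid]
      constructor
      · rw [← mul_assoc, (hTt i k hk1 (by omega) hid).1, zero_mul]
      · rw [mul_assoc, rel3 k i hk1 (by omega) hid, mul_zero]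
    | succ n ih =>
      intro i l k hil hk1 hkl hid
      have hli : l < i := by omega
      have hl1 : 1 ≤ l := by omega
      have hr := hrec i l hl1 hli hid
      have ih' := ih i (l + 1) k (by omega) hk1 (by omega) hid
      constructor
      · rw [hr, mul_add, ih'.1, zero_add, mul_smul_comm,
          show star (t k) * (t l * a i l * star (t l))
            = (star (t k) * t l) * (a i l * star (t l)) by noncomm_ring,
          rel1 k l hk1 (by omega) hl1 (by omega) (by omega), zero_mul, smul_zero]
      · rw [hr, add_mul, ih'.2, zero_add, smul_mul_assoc,
          show t l * a i l * star (t l) * t k = (t l * a i l) * (star (t l) * t k) by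
            noncomm_ring,
          rel1 l k hl1 (by omega) hk1 (by omega) (by omega), mul_zero, smul_zero]
  -- `P m` acts as identity on `a i l` for `m < l`
  have hPa : ∀ m i l, m < l → l ≤ i → i ≤ d → P m * a i l = a i l ∧ a i l * P m = a i l := by
    intro m i l hml hli hid
    rw [hP]
    constructor
    · rw [sub_mul, one_mul, Finset.sum_mul, Finset.sum_eq_zero, sub_zero]
      intro k hk
      simp only [Finset.mem_Icc] at hk
      rw [mul_assoc, (hann (i - l) i l k (by omega) hk.1 (by omega) hid).1, mul_zero]
    · rw [mul_sub, mul_one, Finset.mul_sum, Finset.sum_eq_zero, sub_zero]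
      intro k hk
      simp only [Finset.mem_Icc] at hk
      rw [← mul_assoc, (hann (i - l) i l k (by omega) hk.1 (by omega) hid).2, zero_mul]
  -- star form of the recursion
  have hstarrec : ∀ i j, 1 ≤ j → j < i → i ≤ d →
      star (a i j) = star (a i (j + 1)) + μ • (t j * star (a i j) * star (t j)) := by
    intro i j h1 hji hid
    have hr := congrArg star (hrec i j h1 hji hid)
    rw [star_add, star_smul, star_trivial μ] at hr
    have e : star (t j * a i j * star (t j)) = t j * star (a i j) * star (t j) := by
      simp [star_mul, star_star, mul_assoc]
    rw [e] at hr
    exact hr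
  -- recursion for `star (a i j) * a i j`
  have hXrec : ∀ i j, 1 ≤ j → j < i → i ≤ d →
      star (a i j) * a i j
        = star (a i (j + 1)) * a i (j + 1) + μ ^ 2 • (t j * (star (a i j) * a i j) * star (t j)) := by
    intro i j h1 hji hid
    have hb1 : star (t j) * a i (j + 1) = 0 :=
      (hann (i - (j + 1)) i (j + 1) j (by omega) h1 (by omega) hid).1
    have hb2 : a i (j + 1) * t j = 0 :=
      (hann (i - (j + 1)) i (j + 1) j (by omega) h1 (by omega) hid).2
    have hb1' : star (a i (j + 1)) * t j = 0 := by
      have := congrArg star hb1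
      rwa [star_mul, star_star, star_zero] at this
    have hPr : P (j - 1) * a i j = a i j := (hPa (j - 1) i j (by omega) (by omega) hid).1
    have c1 : star (a i (j + 1)) * (μ • (t j * a i j * star (t j))) = 0 := by
      rw [mul_smul_comm,
        show star (a i (j + 1)) * (t j * a i j * star (t j))
          = (star (a i (j + 1)) * t j) * (a i j * star (t j)) by noncomm_ring,
        hb1', zero_mul, smul_zero]
    have c2 : (μ • (t j * star (a i j) * star (t j))) * a i (j + 1) = 0 := by
      rw [smul_mul_assoc,
        show t j * star (a i j) * star (t j) * a i (j + 1)
          = (t j * star (a i j)) * (star (t j) * a i (j + 1)) by noncomm_ring,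
        hb1, mul_zero, smul_zero]
    have c3 : (μ • (t j * star (a i j) * star (t j))) * (μ • (t j * a i j * star (t j)))
        = μ ^ 2 • (t j * (star (a i j) * a i j) * star (t j)) := by
      rw [smul_mul_assoc, mul_smul_comm, smul_smul, ← sq]
      congr 1
      calc t j * star (a i j) * star (t j) * (t j * a i j * star (t j))
          = t j * star (a i j) * ((star (t j) * t j) * (a i j * star (t j))) := by noncomm_ring
        _ = t j * star (a i j) * (P (j - 1) * a i j * star (t j)) := by
            rw [hstt j h1 (by omega)]; noncomm_ring
        _ = t j * (star (a i j) * a i j) * star (t j) := by rw [hPr]; noncomm_ring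
    have expand := congrArg₂ (fun x y : A => x * y) (hstarrec i j h1 hji hid)
      (hrec i j h1 hji hid)
    conv_lhs => rw [expand, add_mul, mul_add, mul_add, c1, c2, c3, add_zero, zero_add]
  -- recursion for `a i j * star (a i j)`
  have hYrec : ∀ i j, 1 ≤ j → j < i → i ≤ d →
      a i j * star (a i j)
        = a i (j + 1) * star (a i (j + 1)) + μ ^ 2 • (t j * (a i j * star (a i j)) * star (t j)) := by
    intro i j h1 hji hid
    have hb1 : star (t j) * a i (j + 1) = 0 :=
      (hann (i - (j + 1)) i (j + 1) j (by omega) h1 (by omega) hid).1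
    have hb2 : a i (j + 1) * t j = 0 :=
      (hann (i - (j + 1)) i (j + 1) j (by omega) h1 (by omega) hid).2
    have hb2' : star (t j) * star (a i (j + 1)) = 0 := by
      have := congrArg star hb2
      rwa [star_mul, star_zero] at this
    have hPr : a i j * P (j - 1) = a i j := (hPa (j - 1) i j (by omega) (by omega) hid).2
    have hPr' : P (j - 1) * star (a i j) = star (a i j) := by
      have := congrArg star hPr
      rwa [star_mul, hPsa] at this
    have c1 : a i (j + 1) * (μ • (t j * star (a i j) * star (t j))) = 0 := by
      rw [mul_smul_comm,
        show a i (j + 1) * (t j * star (a i j) * star (t j))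
          = (a i (j + 1) * t j) * (star (a i j) * star (t j)) by noncomm_ring,
        hb2, zero_mul, smul_zero]
    have c2 : (μ • (t j * a i j * star (t j))) * star (a i (j + 1)) = 0 := by
      rw [smul_mul_assoc,
        show t j * a i j * star (t j) * star (a i (j + 1))
          = (t j * a i j) * (star (t j) * star (a i (j + 1))) by noncomm_ring,
        hb2', mul_zero, smul_zero]
    have c3 : (μ • (t j * a i j * star (t j))) * (μ • (t j * star (a i j) * star (t j)))
        = μ ^ 2 • (t j * (a i j * star (a i j)) * star (t j)) := by
      rw [smul_mul_assoc, mul_smul_comm, smul_smul, ← sq]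
      congr 1
      calc t j * a i j * star (t j) * (t j * star (a i j) * star (t j))
          = t j * a i j * ((star (t j) * t j) * (star (a i j) * star (t j))) := by noncomm_ring
        _ = t j * a i j * (P (j - 1) * star (a i j) * star (t j)) := by
            rw [hstt j h1 (by omega)]; noncomm_ring
        _ = t j * (a i j * star (a i j)) * star (t j) := by rw [hPr']; noncomm_ring
    have expand := congrArg₂ (fun x y : A => x * y) (hrec i j h1 hji hid)
      (hstarrec i j h1 hji hid)
    conv_lhs => rw [expand, add_mul, mul_add, mul_add, c1, c2, c3, add_zero, zero_add]
  -- uniqueness of solutions of the recursion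
  have huniq : ∀ (jj : ℕ), 1 ≤ jj → jj ≤ d → ∀ w x y : A,
      x = w + μ ^ 2 • (t jj * x * star (t jj)) →
      y = w + μ ^ 2 • (t jj * y * star (t jj)) → x = y := by
    intro jj h1 h2 w x y hx hy
    have hD : x - y = μ ^ 2 • (t jj * (x - y) * star (t jj)) := by
      calc x - y = (w + μ ^ 2 • (t jj * x * star (t jj)))
            - (w + μ ^ 2 • (t jj * y * star (t jj))) := by rw [← hx, ← hy]
        _ = μ ^ 2 • (t jj * x * star (t jj) - t jj * y * star (t jj)) := by
            rw [smul_sub]; abel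
        _ = μ ^ 2 • (t jj * (x - y) * star (t jj)) := by rw [mul_sub, sub_mul]
    have hiter : ∀ n : ℕ,
        x - y = (μ ^ 2) ^ (n + 1) • (t jj ^ (n + 1) * (x - y) * star (t jj ^ (n + 1))) := by
      intro n
      induction n with
      | zero => simpa [pow_one] using hD
      | succ n ihh =>
        calc x - y = μ ^ 2 • (t jj * (x - y) * star (t jj)) := hD
          _ = μ ^ 2 • (t jj * ((μ ^ 2) ^ (n + 1) • (t jj ^ (n + 1) * (x - y) * star (t jj ^ (n + 1)))) * star (t jj)) := by
              conv_lhs => rw [ihh]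
          _ = (μ ^ 2) ^ (n + 2) • (t jj ^ (n + 2) * (x - y) * star (t jj ^ (n + 2))) := by
              rw [mul_smul_comm, smul_mul_assoc, smul_smul]
              congr 1
              · ring
              · simp only [star_pow]
                rw [pow_succ' (t jj) (n + 1), pow_succ (star (t jj)) (n + 1)]
                simp [mul_assoc]
    have htn : ∀ n : ℕ, ‖t jj ^ (n + 1)‖ ≤ 1 := by
      intro n
      induction n with
      | zero => simpa using hnormt jj h1 h2
      | succ n ihn =>
        calc ‖t jj ^ (n + 2)‖ = ‖t jj ^ (n + 1) * t jj‖ := by rw [← pow_succ]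
          _ ≤ ‖t jj ^ (n + 1)‖ * ‖t jj‖ := norm_mul_le _ _
          _ ≤ 1 := by nlinarith [norm_nonneg (t jj ^ (n + 1)), norm_nonneg (t jj), hnormt jj h1 h2]
    have hbound : ∀ n : ℕ, ‖x - y‖ ≤ (μ ^ 2) ^ (n + 1) * ‖x - y‖ := by
      intro n
      calc ‖x - y‖ = ‖(μ ^ 2) ^ (n + 1) • (t jj ^ (n + 1) * (x - y) * star (t jj ^ (n + 1)))‖ := by
            rw [← hiter n]
        _ = (μ ^ 2) ^ (n + 1) * ‖t jj ^ (n + 1) * (x - y) * star (t jj ^ (n + 1))‖ := by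
            rw [norm_smul, Real.norm_eq_abs, abs_of_nonneg (by positivity)]
        _ ≤ (μ ^ 2) ^ (n + 1) * ‖x - y‖ := by
            apply mul_le_mul_of_nonneg_left _ (by positivity)
            calc ‖t jj ^ (n + 1) * (x - y) * star (t jj ^ (n + 1))‖
                ≤ ‖t jj ^ (n + 1) * (x - y)‖ * ‖star (t jj ^ (n + 1))‖ := norm_mul_le _ _
              _ ≤ ‖t jj ^ (n + 1)‖ * ‖x - y‖ * ‖star (t jj ^ (n + 1))‖ :=
                  mul_le_mul_of_nonneg_right (norm_mul_le _ _) (norm_nonneg _)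
              _ ≤ ‖x - y‖ := by
                  rw [norm_star]
                  nlinarith [htn n, norm_nonneg (t jj ^ (n + 1)), norm_nonneg (x - y), mul_nonneg (norm_nonneg (t jj ^ (n + 1))) (norm_nonneg (x - y))]
    have hlim : Filter.Tendsto (fun n : ℕ => (μ ^ 2) ^ (n + 1) * ‖x - y‖)
        Filter.atTop (nhds 0) := by
      have h0 : Filter.Tendsto (fun n : ℕ => (μ ^ 2) ^ n) Filter.atTop (nhds 0) :=
        tendsto_pow_atTop_nhds_zero_of_lt_one (by positivity) hμsq
      have h1' := (h0.comp (Filter.tendsto_add_atTop_nat 1)).mul_const ‖x - y‖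
      simpa using h1'
    have hle : ‖x - y‖ ≤ 0 := ge_of_tendsto' hlim hbound
    have : x - y = 0 := by
      rw [← norm_le_zero_iff]; exact hle
    rw [sub_eq_zero] at this
    exact this
  -- conjugation helpers
  have conj_add : ∀ (jj : ℕ) (x y : A),
      t jj * (x + y) * star (t jj) = t jj * x * star (t jj) + t jj * y * star (t jj) := by
    intro jj x y; rw [mul_add, add_mul]
  have conj_sub : ∀ (jj : ℕ) (x y : A),
      t jj * (x - y) * star (t jj) = t jj * x * star (t jj) - t jj * y * star (t jj) := by
    intro jj x y; rw [mul_sub, sub_mul]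
  have conj_smul : ∀ (jj : ℕ) (c : ℝ) (x : A),
      t jj * (c • x) * star (t jj) = c • (t jj * x * star (t jj)) := by
    intro jj c x; rw [mul_smul_comm, smul_mul_assoc]
  have conj_sum : ∀ (jj : ℕ) (s : Finset ℕ) (f : ℕ → A),
      t jj * (∑ k ∈ s, f k) * star (t jj) = ∑ k ∈ s, t jj * f k * star (t jj) := by
    intro jj s f; rw [Finset.mul_sum, Finset.sum_mul]
  -- base case of the main statement
  have hbase2 : ∀ i, 1 ≤ i → i ≤ d →
      star (a i i) * a i i = P (i - 1) + μ ^ 2 • (a i i * star (a i i)) := by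
    intro i h1 h2
    rw [haiisq i h1 h2, haii i h1 h2, star_mul, hTsa i h1 h2, ← hbase i h1 h2, sq]
    noncomm_ring
  -- main induction
  have main : ∀ n i j, i = j + n → 1 ≤ j → i ≤ d →
      star (a i j) * a i j =
        P (j - 1) + μ ^ 2 • (a i j * star (a i j)) -
          (1 - μ ^ 2) • ∑ k ∈ Finset.Ico j i, a k j * star (a k j) := by
    intro n
    induction n with
    | zero =>
      intro i j hij h1 hid
      obtain rfl : j = i := by omega
      rw [Finset.Ico_self, Finset.sum_empty, smul_zero, sub_zero]
      exact hbase2 j h1 hid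
    | succ n ih =>
      intro i j hij h1 hid
      have hji : j < i := by omega
      have hjd : j ≤ d := by omega
      have IH := ih i (j + 1) (by omega) (by omega) hid
      have hQ : t j * P (j - 1) * star (t j) = t j * star (t j) := by
        rw [htP (j - 1) j (by omega) hjd]
      have hSsplit : ∑ k ∈ Finset.Ico j i, a k j * star (a k j)
          = a j j * star (a j j) + ∑ k ∈ Finset.Ico (j + 1) i, a k j * star (a k j) :=
        Finset.sum_eq_sum_Ico_succ_bot hji _
      have hPj : P j = P (j - 1) - t j * star (t j) := by
        rw [hP j, hP (j - 1)]
        have e : Finset.Icc 1 j = Finset.Icc 1 ((j - 1) + 1) := by congr 1; omega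
        rw [e, Finset.sum_Icc_succ_top (by omega)]
        have e2 : j - 1 + 1 = j := by omega
        rw [e2, sub_add_eq_sub_sub]
      have R_S : ∑ k ∈ Finset.Ico (j + 1) i, a k j * star (a k j)
          = (∑ k ∈ Finset.Ico (j + 1) i, a k (j + 1) * star (a k (j + 1)))
            + μ ^ 2 • ∑ k ∈ Finset.Ico (j + 1) i, t j * (a k j * star (a k j)) * star (t j) := by
        rw [Finset.smul_sum, ← Finset.sum_add_distrib]
        apply Finset.sum_congr rfl
        intro k hk
        simp only [Finset.mem_Ico] at hk
        exact hYrec k j h1 hk.1 (by omega)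
      have R_D := hYrec i j h1 hji hid
      have R_T := hTshift j h1 hjd
      have hYstep : (P (j - 1) + μ ^ 2 • (a i j * star (a i j)) -
            (1 - μ ^ 2) • ∑ k ∈ Finset.Ico j i, a k j * star (a k j))
          = star (a i (j + 1)) * a i (j + 1) + μ ^ 2 •
            (t j * (P (j - 1) + μ ^ 2 • (a i j * star (a i j)) -
              (1 - μ ^ 2) • ∑ k ∈ Finset.Ico j i, a k j * star (a k j)) * star (t j)) := by
        rw [hSsplit, haiisq j h1 hjd, IH]
        rw [conj_sub, conj_add, conj_smul, conj_smul, conj_add, conj_sum, hQ]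
        simp only [Nat.add_sub_cancel]
        linear_combination (norm := module) (μ ^ 2 : ℝ) • R_D - hPj
          - ((1 : ℝ) - μ ^ 2) • R_S + ((1 : ℝ) - μ ^ 2) • R_T
      exact huniq j h1 hjd _ _ _ (hXrec i j h1 hji hid) hYstep
  intro i j h1 hji hid
  exact main (i - j) i j (by omega) h1 hid
end

section
/- For all 1 ≤ j < i ≤ d one has (a_i^{(j)})^* T_j^2 = T_j^2 (a_i^{(j)})^* and (a_i^{(j)})^* t_j = μ t_j (a_i^{(j)})^*, where T_j^2 = ∑_{n=1}^∞ μ^{2(n−1)} t_j^n t_j^{*n}. -/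
/-!
By downward induction on `m`, both `aᵢ⁽ᵐ⁾` and its adjoint are killed on the right by every
`tₖ` with `k < m`: for `m = i` because `Tᵢ² tₖ = 0` and the C*-identity force `Tᵢ tₖ = 0`, and in
the induction step because every term of the series for `aᵢ⁽ᵐ⁾` with `n ≥ 1` ends in
`tₘ*ⁿ tₖ = 0`.

Hence `c = aᵢ⁽ʲ⁺¹⁾` and `c = (aᵢ⁽ʲ⁺¹⁾)*` satisfy `c tⱼ = 0` and `c tⱼ* tⱼ = c`, so that
`c tⱼ*ⁿ⁺¹ tⱼ = c tⱼ*ⁿ`; shifting the index in `∑ μⁿ tⱼⁿ c tⱼ*ⁿ` then gives the twisted relations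
`s tⱼ = μ tⱼ s` for `s = aᵢ⁽ʲ⁾` and `s = (aᵢ⁽ʲ⁾)*`. Together they make `(aᵢ⁽ʲ⁾)*` commute with
each `tⱼⁿ tⱼ*ⁿ`, hence with `Tⱼ²`.
-/

open Finset

theorem star_pow_succ_mul_eq_zero {A : Type*} [Semiring A] [StarMul A] {x y : A}
    (h : star x * y = 0) (n : ℕ) : star (x ^ (n + 1)) * y = 0 := by
  rw [star_pow, pow_succ, mul_assoc, h, mul_zero]

theorem HasSum.mul_right_eq_zero {ι A : Type*} [Semiring A] [TopologicalSpace A]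
    [IsTopologicalSemiring A] [T2Space A] {f : ι → A} {s y : A} (hs : HasSum f s)
    (hf : ∀ n, f n * y = 0) : s * y = 0 := by
  have h := hs.mul_right y
  simp only [hf] at h
  exact h.unique hasSum_zero

theorem mul_star_mul_self_eq_self {ι A : Type*} [Ring A] [Star A] {s : Finset ι} {t : ι → A}
    {x c : A} (hx : star x * x = 1 - ∑ k ∈ s, t k * star (t k)) (hc : ∀ k ∈ s, c * t k = 0) :
    c * (star x * x) = c := by
  rw [hx, mul_sub, mul_one, mul_sum, sum_eq_zero fun k hk => by rw [← mul_assoc, hc k hk, zero_mul],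
    sub_zero]

theorem mul_pow_eq_smul_pow_mul {A : Type*} [Ring A] [Algebra ℝ A] {μ : ℝ} {a x : A}
    (h : a * x = μ • (x * a)) (n : ℕ) : a * x ^ n = μ ^ n • (x ^ n * a) := by
  induction n with
  | zero => simp
  | succ n ih =>
    rw [pow_succ, ← mul_assoc, ih, smul_mul_assoc, mul_assoc, h, mul_smul_comm, smul_smul,
      pow_succ, mul_assoc]

theorem commute_star_pow_mul_star_pow {A : Type*} [Ring A] [StarRing A] [Algebra ℝ A]
    [StarModule ℝ A] {μ : ℝ} {a x : A} (ha : a * x = μ • (x * a))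
    (hsa : star a * x = μ • (x * star a)) (n : ℕ) : Commute (star a) (x ^ n * star (x ^ n)) := by
  have hleft := mul_pow_eq_smul_pow_mul hsa n
  have hright : star (x ^ n) * star a = μ ^ n • (star a * star (x ^ n)) := by
    simpa only [star_mul, star_smul, star_trivial] using
      congrArg star (mul_pow_eq_smul_pow_mul ha n)
  rw [Commute, SemiconjBy, ← mul_assoc, hleft, mul_assoc, hright, mul_smul_comm, smul_mul_assoc,
    mul_assoc]

section TwistedConjugationSeries

variable {A : Type*} [Ring A] [StarRing A] [Algebra ℝ A] [TopologicalSpace A] {μ : ℝ} {x c s : A}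

theorem hasSum_twisted_conj_star [StarModule ℝ A] [ContinuousStar A]
    (hs : HasSum (fun n : ℕ => μ ^ n • (x ^ n * c * star (x ^ n))) s) :
    HasSum (fun n : ℕ => μ ^ n • (x ^ n * star c * star (x ^ n))) (star s) := by
  simpa only [star_smul, star_trivial, star_mul, star_star, ← mul_assoc] using hs.star

theorem mul_eq_zero_of_hasSum_twisted_conj [IsTopologicalRing A] [T2Space A] {y : A}
    (hs : HasSum (fun n : ℕ => μ ^ n • (x ^ n * c * star (x ^ n))) s)
    (hx : star x * y = 0) (hc : c * y = 0) : s * y = 0 :=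
  hs.mul_right_eq_zero fun n => by
    cases n with
    | zero => simpa using hc
    | succ n => rw [smul_mul_assoc, mul_assoc, star_pow_succ_mul_eq_zero hx, mul_zero, smul_zero]

theorem mul_eq_smul_mul_of_hasSum_twisted_conj [IsTopologicalRing A] [T2Space A]
    [ContinuousConstSMul ℝ A]
    (hs : HasSum (fun n : ℕ => μ ^ n • (x ^ n * c * star (x ^ n))) s)
    (hx : star x * (star x * x) = star x) (hc : c * (star x * x) = c) (hcx : c * x = 0) :
    s * x = μ • (x * s) := by
  have hshift : ∀ n : ℕ, c * (star x ^ (n + 1) * x) = c * star x ^ n := by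
    intro n
    cases n with
    | zero => rw [pow_one, pow_zero, mul_one, hc]
    | succ n => simp only [pow_succ, mul_assoc, hx]
  have hterm : ∀ n : ℕ, μ ^ (n + 1) • (x ^ (n + 1) * c * star (x ^ (n + 1))) * x
      = μ • (x * (μ ^ n • (x ^ n * c * star (x ^ n)))) := by
    intro n
    rw [star_pow, star_pow, smul_mul_assoc, mul_assoc, mul_assoc, hshift, mul_smul_comm, smul_smul,
      ← pow_succ', pow_succ' x, mul_assoc, mul_assoc]
  have htail : HasSum (fun n : ℕ => μ ^ (n + 1) • (x ^ (n + 1) * c * star (x ^ (n + 1))) * x)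
      (μ • (x * s)) := by
    simpa only [hterm] using (hs.mul_left x).const_smul μ
  simpa [hcx] using ((hasSum_nat_add_iff' 1).mpr (hs.mul_right x)).unique htail

end TwistedConjugationSeries

theorem IsSelfAdjoint.mul_eq_zero_of_sq_mul_eq_zero {A : Type*} [NormedRing A] [StarRing A]
    [CStarRing A] {T y : A} (hT : IsSelfAdjoint T) (h : T ^ 2 * y = 0) : T * y = 0 :=
  (CStarRing.star_mul_self_eq_zero_iff _).mp <| by
    rw [star_mul, hT.star_eq, mul_assoc, ← mul_assoc T, ← sq, h, mul_zero]

theorem IsSelfAdjoint.mul_eq_zero_of_hasSum_sq {A : Type*} [CStarAlgebra A] {μ : ℝ} {T x y : A}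
    (hT : IsSelfAdjoint T)
    (hTsq : HasSum (fun n : ℕ => μ ^ (2 * n) • (x ^ (n + 1) * star (x ^ (n + 1)))) (T ^ 2))
    (hxy : star x * y = 0) : T * y = 0 :=
  hT.mul_eq_zero_of_sq_mul_eq_zero <| hTsq.mul_right_eq_zero fun n => by
    rw [smul_mul_assoc, mul_assoc, star_pow_succ_mul_eq_zero hxy, mul_zero, smul_zero]

theorem a_mul_t_eq_zero {A : Type*} [CStarAlgebra A] [PartialOrder A] [StarOrderedRing A]
    {d : ℕ} {μ : ℝ} {t T : ℕ → A} {a : ℕ → ℕ → A}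
    (rel1 : ∀ i j, 1 ≤ i → i ≤ d → 1 ≤ j → j ≤ d → i ≠ j → star (t i) * t j = 0)
    (rel3 : ∀ i j, 1 ≤ i → i < j → j ≤ d → t j * t i = 0)
    (hTpos : ∀ i, 1 ≤ i → i ≤ d → 0 ≤ T i)
    (hTsq : ∀ i, 1 ≤ i → i ≤ d →
      HasSum (fun n : ℕ => μ ^ (2 * n) • ((t i) ^ (n + 1) * star ((t i) ^ (n + 1))))
        (T i ^ 2))
    (haii : ∀ i, 1 ≤ i → i ≤ d → a i i = T i * t i)
    (haij : ∀ i j, 1 ≤ j → j < i → i ≤ d →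
      HasSum (fun n : ℕ => μ ^ n • ((t j) ^ n * a i (j + 1) * star ((t j) ^ n)))
        (a i j))
    {i m k : ℕ} (hmi : m ≤ i) (hid : i ≤ d) (hk : 1 ≤ k) (hkm : k < m) :
    a i m * t k = 0 ∧ star (a i m) * t k = 0 := by
  induction hmi using Nat.decreasingInduction generalizing k with
  | self =>
    have hT := IsSelfAdjoint.of_nonneg (hTpos i (by omega) hid)
    have hTt : T i * t k = 0 := hT.mul_eq_zero_of_hasSum_sq (hTsq i (by omega) hid)
      (rel1 i k (by omega) hid hk (by omega) (by omega))
    rw [haii i (by omega) hid]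
    refine ⟨?_, ?_⟩
    · rw [mul_assoc, rel3 k i hk hkm hid, mul_zero]
    · rw [star_mul, hT.star_eq, mul_assoc, hTt, mul_zero]
  | of_succ m hmi ih =>
    have hs := haij i m (by omega) hmi hid
    have htm : star (t m) * t k = 0 := rel1 m k (by omega) (by omega) hk (by omega) (by omega)
    obtain ⟨hc, hc'⟩ := ih hk (by omega)
    exact ⟨mul_eq_zero_of_hasSum_twisted_conj hs htm hc,
      mul_eq_zero_of_hasSum_twisted_conj (hasSum_twisted_conj_star hs) htm hc'⟩

theorem a_star_commutes_T_and_t_general {A : Type*} [CStarAlgebra A] [PartialOrder A] [StarOrderedRing A]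
    {d : ℕ} {μ : ℝ}
    (t T : ℕ → A) (a : ℕ → ℕ → A)
    (rel1 : ∀ i j, 1 ≤ i → i ≤ d → 1 ≤ j → j ≤ d → i ≠ j → star (t i) * t j = 0)
    (rel2 : ∀ i, 1 ≤ i → i ≤ d →
      star (t i) * t i = 1 - ∑ k ∈ Finset.Ico 1 i, t k * star (t k))
    (rel3 : ∀ i j, 1 ≤ i → i < j → j ≤ d → t j * t i = 0)
    (hTpos : ∀ i, 1 ≤ i → i ≤ d → 0 ≤ T i)
    (hTsq : ∀ i, 1 ≤ i → i ≤ d →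
      HasSum (fun n : ℕ => μ ^ (2 * n) • ((t i) ^ (n + 1) * star ((t i) ^ (n + 1))))
        (T i ^ 2))
    (haii : ∀ i, 1 ≤ i → i ≤ d → a i i = T i * t i)
    (haij : ∀ i j, 1 ≤ j → j < i → i ≤ d →
      HasSum (fun n : ℕ => μ ^ n • ((t j) ^ n * a i (j + 1) * star ((t j) ^ n)))
        (a i j)) :
    ∀ i j, 1 ≤ j → j < i → i ≤ d →
      star (a i j) * T j ^ 2 = T j ^ 2 * star (a i j) ∧
      star (a i j) * t j = μ • (t j * star (a i j)) := by
  intro i j hj hji hid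
  have hjd : j ≤ d := hji.le.trans hid
  have hkill : ∀ k, 1 ≤ k → k ≤ j → a i (j + 1) * t k = 0 ∧ star (a i (j + 1)) * t k = 0 :=
    fun k hk hkj => a_mul_t_eq_zero rel1 rel3 hTpos hTsq haii haij hji hid hk (by omega)
  have hproj : ∀ c : A, (∀ k, 1 ≤ k → k < j → c * t k = 0) → c * (star (t j) * t j) = c :=
    fun c hc => mul_star_mul_self_eq_self (rel2 j hj hjd) fun k hk =>
      hc k (mem_Ico.1 hk).1 (mem_Ico.1 hk).2
  have htj := hproj (star (t j)) fun k hk hkj => rel1 j k hj hjd hk (by omega) (by omega)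
  have hs := haij i j hj hji hid
  have htwist := mul_eq_smul_mul_of_hasSum_twisted_conj hs htj
    (hproj _ fun k hk hkj => (hkill k hk hkj.le).1) (hkill j hj le_rfl).1
  have htwist_star := mul_eq_smul_mul_of_hasSum_twisted_conj (hasSum_twisted_conj_star hs) htj
    (hproj _ fun k hk hkj => (hkill k hk hkj.le).2) (hkill j hj le_rfl).2
  refine ⟨?_, htwist_star⟩
  rw [← (hTsq j hj hjd).tsum_eq]
  exact (Commute.tsum_right _ fun n =>
    (commute_star_pow_mul_star_pow htwist htwist_star (n + 1)).smul_right _).eq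

/-- For `1 ≤ j < i ≤ d`: `(aᵢ⁽ʲ⁾)* Tⱼ² = Tⱼ² (aᵢ⁽ʲ⁾)*` and
`(aᵢ⁽ʲ⁾)* tⱼ = μ tⱼ (aᵢ⁽ʲ⁾)*`, where `Tⱼ² = ∑_{n=1}^∞ μ^{2(n-1)} tⱼⁿ tⱼ*ⁿ`. -/
theorem a_star_commutes_T_and_t {A : Type*} [CStarAlgebra A] [PartialOrder A] [StarOrderedRing A]
    {d : ℕ} (hd : 0 < d) {μ : ℝ} (hμ₁ : -1 < μ) (hμ₂ : μ < 1)
    (t T P : ℕ → A) (a : ℕ → ℕ → A)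
    (rel1 : ∀ i j, 1 ≤ i → i ≤ d → 1 ≤ j → j ≤ d → i ≠ j → star (t i) * t j = 0)
    (rel2 : ∀ i, 1 ≤ i → i ≤ d →
      star (t i) * t i = 1 - ∑ k ∈ Finset.Ico 1 i, t k * star (t k))
    (rel3 : ∀ i j, 1 ≤ i → i < j → j ≤ d → t j * t i = 0)
    (hP : ∀ j, P j = 1 - ∑ k ∈ Finset.Icc 1 j, t k * star (t k))
    (hTpos : ∀ i, 1 ≤ i → i ≤ d → 0 ≤ T i)
    (hTsq : ∀ i, 1 ≤ i → i ≤ d →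
      HasSum (fun n : ℕ => μ ^ (2 * n) • ((t i) ^ (n + 1) * star ((t i) ^ (n + 1))))
        (T i ^ 2))
    (haii : ∀ i, 1 ≤ i → i ≤ d → a i i = T i * t i)
    (haij : ∀ i j, 1 ≤ j → j < i → i ≤ d →
      HasSum (fun n : ℕ => μ ^ n • ((t j) ^ n * a i (j + 1) * star ((t j) ^ n)))
        (a i j)) :
    ∀ i j, 1 ≤ j → j < i → i ≤ d →
      star (a i j) * T j ^ 2 = T j ^ 2 * star (a i j) ∧
      star (a i j) * t j = μ • (t j * star (a i j)) :=
  a_star_commutes_T_and_t_general t T a rel1 rel2 rel3 hTpos hTsq haii haij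
end

section
/- For all indices with 1 ≤ k ≤ j < i ≤ d one has (a_i^{(k)})^* a_j^{(k)} = μ a_j^{(k)} (a_i^{(k)})^*. -/
lemma eigen_aux {A : Type*} [CStarAlgebra A] [PartialOrder A] [StarOrderedRing A]
    (T x : A) (hT : 0 ≤ T) (c : ℝ) (hc : 0 ≤ c)
    (h : x * (T * T) = (c ^ 2) • x) : x * T = c • x := by
  have hTsa : star T = T := (IsSelfAdjoint.of_nonneg hT)
  rcases eq_or_lt_of_le hc with rfl | hcpos
  · have h0 : x * (T * T) = 0 := by simpa using h
    have hz : (x * T) * star (x * T) = 0 := by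
      rw [star_mul, hTsa, ← mul_assoc, mul_assoc x T T, h0, zero_mul]
    have : x * T = 0 := (CStarRing.mul_star_self_eq_zero_iff (x * T)).mp hz
    simpa using this
  · have hmem : (-c) ∉ spectrum ℝ T := by
      intro hmemc
      have := spectrum_nonneg_of_nonneg hT hmemc
      linarith
    have hu : IsUnit ((algebraMap ℝ A) (-c) - T) := spectrum.notMem_iff.mp hmem
    have hu2 : IsUnit (T + c • (1 : A)) := by
      have heq : -((algebraMap ℝ A) (-c) - T) = T + c • (1 : A) := by
        simp [Algebra.algebraMap_eq_smul_one]
      rw [← heq]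
      exact hu.neg
    obtain ⟨u, hu3⟩ := hu2
    have key : (x * T - c • x) * (T + c • (1 : A)) = 0 := by
      have : (x * T - c • x) * (T + c • (1 : A))
          = x * (T * T) - (c ^ 2) • x := by
        simp only [mul_add, sub_mul, mul_smul_comm, smul_mul_assoc, mul_one, mul_assoc,
          smul_sub, smul_smul, pow_two]
        abel
      rw [this, h, sub_self]
    have h5 : (x * T - c • x) * ((T + c • (1 : A)) * (↑u⁻¹ : A)) = 0 := by
      rw [← mul_assoc, key, zero_mul]
    rw [← hu3, Units.mul_inv, mul_one] at h5
    exact sub_eq_zero.mp h5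

section PowLemmas
variable {A : Type*} [Ring A] [StarRing A]

lemma absorb_aux (t x : A) (h1 : (star t * t) * t = t)
    (hx2 : x * (star t * t) = x) :
    ∀ s : ℕ, (x * (star t) ^ s) * (star t * t) = x * (star t) ^ s := by
  have hst : star t * (star t * t) = star t := by
    have := congrArg star h1
    simpa [star_mul, mul_assoc] using this
  intro s
  cases s with
  | zero => simpa using hx2
  | succ s =>
      rw [pow_succ]
      simp only [mul_assoc]
      rw [hst]

lemma powP (t x : A) (h1 : (star t * t) * t = t)
    (hx1 : x * t = 0) (hx2 : x * (star t * t) = x) :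
    ∀ m n : ℕ, (x * (star t) ^ n) * t ^ m
      = if m ≤ n then x * (star t) ^ (n - m) else 0 := by
  intro m
  induction m with
  | zero => intro n; simp
  | succ r ih =>
      intro n
      rw [pow_succ', ← mul_assoc]
      cases n with
      | zero =>
          simp only [pow_zero, mul_one, hx1, zero_mul]
          rw [if_neg (by omega)]
      | succ s =>
          have : (x * (star t) ^ (s + 1)) * t = x * (star t) ^ s := by
            rw [pow_succ, ← mul_assoc, mul_assoc _ (star t) t]
            exact absorb_aux t x h1 hx2 s
          rw [this, ih s]
          simp only [Nat.succ_sub_succ, Nat.add_le_add_iff_right]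

lemma powO (t x y : A) (h1 : (star t * t) * t = t)
    (hx1 : x * t = 0) (hx2 : x * (star t * t) = x)
    (hy1 : star t * y = 0) :
    ∀ n m : ℕ, (x * (star t) ^ n) * (t ^ m * y) = if n = m then x * y else 0 := by
  have hsty : ∀ p : ℕ, 1 ≤ p → (star t) ^ p * y = 0 := by
    intro p hp
    obtain ⟨q, rfl⟩ := Nat.exists_eq_add_of_le hp
    rw [add_comm, pow_succ, mul_assoc, hy1, mul_zero]
  intro n m
  rw [← mul_assoc, powP t x h1 hx1 hx2 m n]
  by_cases h : m ≤ n
  · rw [if_pos h]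
    rcases eq_or_lt_of_le h with rfl | hlt
    · simp
    · rw [mul_assoc, hsty (n - m) (by omega), mul_zero, if_neg (by omega)]
  · rw [if_neg h, zero_mul, if_neg (by omega)]

end PowLemmas

lemma diagSum {A : Type*} [CStarAlgebra A] {f g C : ℕ → A} {S S' : A}
    (hf : HasSum f S) (hg : HasSum g S')
    (h : ∀ n m, star (f n) * g m = if n = m then C n else 0) :
    HasSum C (star S * S') := by
  have hst : HasSum (fun n => star (f n)) (star S) := hf.star
  have key : ∀ n, star (f n) * S' = C n := by
    intro n
    have h1 : HasSum (fun m => star (f n) * g m) (star (f n) * S') := hg.mul_left _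
    have h2 : HasSum (fun m => star (f n) * g m) (C n) := by
      have h3 : HasSum (fun m => if m = n then C n else 0) (C n) := hasSum_ite_eq n (C n)
      convert h3 using 1
      funext m
      rw [h n m]
      simp [eq_comm]
    exact h1.unique h2
  have := hst.mul_right S'
  simpa only [key] using this

lemma crossO {A : Type*} [Ring A] [StarRing A] (t x y : A) (h1 : (star t * t) * t = t)
    (hx1 : x * t = 0) (hx2 : x * (star t * t) = x)
    (hy1 : star t * y = 0) :
    ∀ n m : ℕ, (t ^ n * x * (star t) ^ n) * (t ^ m * y * (star t) ^ m)
      = if n = m then t ^ n * (x * y) * (star t) ^ n else 0 := by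
  intro n m
  rw [mul_assoc (t ^ n) x ((star t) ^ n)]
  rw [← mul_assoc (t ^ n * (x * (star t) ^ n)) (t ^ m * y) ((star t) ^ m)]
  rw [mul_assoc (t ^ n) (x * (star t) ^ n) (t ^ m * y)]
  rw [powO t x y h1 hx1 hx2 hy1 n m]
  by_cases h : n = m
  · subst h
    rw [if_pos rfl, if_pos rfl, ← mul_assoc]
  · rw [if_neg h, if_neg h, mul_zero, zero_mul]

set_option maxHeartbeats 4000000 in
/-- For `1 ≤ k ≤ j < i ≤ d`, `(aᵢ⁽ᵏ⁾)* aⱼ⁽ᵏ⁾ = μ aⱼ⁽ᵏ⁾ (aᵢ⁽ᵏ⁾)*`. -/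
theorem a_star_mul_a_jk {A : Type*} [CStarAlgebra A] [PartialOrder A] [StarOrderedRing A]
    {d : ℕ} (hd : 0 < d) {μ : ℝ} (hμ₁ : -1 < μ) (hμ₂ : μ < 1)
    (t T P : ℕ → A) (a : ℕ → ℕ → A)
    (rel1 : ∀ i j, 1 ≤ i → i ≤ d → 1 ≤ j → j ≤ d → i ≠ j → star (t i) * t j = 0)
    (rel2 : ∀ i, 1 ≤ i → i ≤ d →
      star (t i) * t i = 1 - ∑ k ∈ Finset.Ico 1 i, t k * star (t k))
    (rel3 : ∀ i j, 1 ≤ i → i < j → j ≤ d → t j * t i = 0)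
    (hP : ∀ j, P j = 1 - ∑ k ∈ Finset.Icc 1 j, t k * star (t k))
    (hTpos : ∀ i, 1 ≤ i → i ≤ d → 0 ≤ T i)
    (hTsq : ∀ i, 1 ≤ i → i ≤ d →
      HasSum (fun n : ℕ => μ ^ (2 * n) • ((t i) ^ (n + 1) * star ((t i) ^ (n + 1))))
        (T i ^ 2))
    (haii : ∀ i, 1 ≤ i → i ≤ d → a i i = T i * t i)
    (haij : ∀ i j, 1 ≤ j → j < i → i ≤ d →
      HasSum (fun n : ℕ => μ ^ n • ((t j) ^ n * a i (j + 1) * star ((t j) ^ n)))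
        (a i j)) :
    ∀ i j k, 1 ≤ k → k ≤ j → j < i → i ≤ d →
      star (a i k) * a j k = μ • (a j k * star (a i k)) := by
  -- Q_l absorption facts
  have hQt : ∀ l, 1 ≤ l → l ≤ d → (star (t l) * t l) * t l = t l := by
    intro l h1 h2
    rw [rel2 l h1 h2, sub_mul, one_mul, Finset.sum_mul]
    have hz : ∀ m ∈ Finset.Ico 1 l, (t m * star (t m)) * t l = 0 := by
      intro m hm
      simp only [Finset.mem_Ico] at hm
      rw [mul_assoc, rel1 m l hm.1 (by omega) h1 h2 (by omega), mul_zero]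
    rw [Finset.sum_congr rfl hz, Finset.sum_const_zero, sub_zero]
  have htQ : ∀ l, 1 ≤ l → l ≤ d → t l * (star (t l) * t l) = t l := by
    intro l h1 h2
    rw [rel2 l h1 h2, mul_sub, mul_one, Finset.mul_sum]
    have hz : ∀ m ∈ Finset.Ico 1 l, t l * (t m * star (t m)) = 0 := by
      intro m hm
      simp only [Finset.mem_Ico] at hm
      rw [← mul_assoc, rel3 m l hm.1 hm.2 h2, zero_mul]
    rw [Finset.sum_congr rfl hz, Finset.sum_const_zero, sub_zero]
  -- `star (t l) * T i = 0` for `l ≠ i`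
  have hTV : ∀ i l, 1 ≤ i → i ≤ d → 1 ≤ l → l ≤ d → l ≠ i → star (t l) * T i = 0 := by
    intro i l h1 h2 h3 h4 h5
    have hsum := (hTsq i h1 h2).mul_left (star (t l))
    have hzero : (fun n => star (t l) * (μ ^ (2*n) • ((t i) ^ (n + 1) * star ((t i) ^ (n + 1)))))
        = fun _ => (0 : A) := by
      funext n
      have hkey : star (t l) * ((t i) ^ (n + 1) * star ((t i) ^ (n + 1))) = 0 := by
        rw [pow_succ' (t i) n, mul_assoc (t i), ← mul_assoc (star (t l)) (t i),
          rel1 l i h3 h4 h1 h2 h5, zero_mul]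
      rw [mul_smul_comm, hkey, smul_zero]
    rw [hzero] at hsum
    have h0 : star (t l) * (T i ^ 2) = 0 := hsum.unique hasSum_zero
    have hx := eigen_aux (T i) (star (t l)) (hTpos i h1 h2) 0 le_rfl (by
      rw [← pow_two]
      simpa using h0)
    simpa using hx
  -- vanishing lemma
  have hV : ∀ p i m, 1 ≤ m → m ≤ i → i ≤ d → i - m = p → ∀ l, 1 ≤ l → l < m →
      star (t l) * a i m = 0 ∧ a i m * t l = 0 := by
    intro p
    induction p with
    | zero =>
        intro i m h1 h2 h3 hp l hl1 hl2
        have hmi : m = i := by omega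
        subst hmi
        rw [haii m h1 h3]
        constructor
        · rw [← mul_assoc, hTV m l h1 h3 hl1 (by omega) (by omega), zero_mul]
        · rw [mul_assoc, rel3 l m hl1 hl2 h3, mul_zero]
    | succ p ih =>
        intro i m h1 h2 h3 hp l hl1 hl2
        have hmi : m < i := by omega
        have hsum := haij i m h1 hmi h3
        have hih := ih i (m+1) (by omega) (by omega) h3 (by omega)
        constructor
        · have h0 : (fun n => star (t l) * (μ ^ n • ((t m) ^ n * a i (m + 1) * star ((t m) ^ n))))
              = fun _ => (0 : A) := by
            funext n
            rw [mul_smul_comm]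
            cases n with
            | zero =>
                simp only [pow_zero, one_mul, star_one, mul_one]
                rw [(hih l hl1 (by omega)).1, smul_zero]
            | succ q =>
                have : star (t l) * ((t m) ^ (q+1) * a i (m + 1) * star ((t m) ^ (q+1))) = 0 := by
                  rw [pow_succ' (t m) q, mul_assoc (t m) ((t m)^q), mul_assoc (t m),
                    ← mul_assoc (star (t l)) (t m), rel1 l m hl1 (by omega) h1 (by omega) (by omega),
                    zero_mul]
                rw [this, smul_zero]
          have := hsum.mul_left (star (t l))
          rw [h0] at this
          exact this.unique hasSum_zero
        · have h0 : (fun n => (μ ^ n • ((t m) ^ n * a i (m + 1) * star ((t m) ^ n))) * t l)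
              = fun _ => (0 : A) := by
            funext n
            rw [smul_mul_assoc]
            cases n with
            | zero =>
                simp only [pow_zero, one_mul, star_one, mul_one]
                rw [(hih l hl1 (by omega)).2, smul_zero]
            | succ q =>
                have : ((t m) ^ (q+1) * a i (m + 1) * star ((t m) ^ (q+1))) * t l = 0 := by
                  rw [star_pow, pow_succ (star (t m)) q,
                    ← mul_assoc ((t m) ^ (q+1) * a i (m+1)) ((star (t m))^q) (star (t m)),
                    mul_assoc _ (star (t m)) (t l),
                    rel1 m l (by omega) (by omega) hl1 (by omega) (by omega), mul_zero]
                rw [this, smul_zero]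
          have := hsum.mul_right (t l)
          rw [h0] at this
          exact this.unique hasSum_zero
  -- Q-absorption for the a's
  have hQa : ∀ i m k, 1 ≤ k → k < m → m ≤ i → i ≤ d →
      (star (t k) * t k) * a i m = a i m ∧ a i m * (star (t k) * t k) = a i m := by
    intro i m k hk1 hkm hmi hid
    have hkd : k ≤ d := by omega
    constructor
    · rw [rel2 k hk1 hkd, sub_mul, one_mul, Finset.sum_mul]
      have hz : ∀ l ∈ Finset.Ico 1 k, (t l * star (t l)) * a i m = 0 := by
        intro l hl
        simp only [Finset.mem_Ico] at hl
        rw [mul_assoc, (hV (i - m) i m (by omega) hmi hid rfl l hl.1 (by omega)).1, mul_zero]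
      rw [Finset.sum_congr rfl hz, Finset.sum_const_zero, sub_zero]
    · rw [rel2 k hk1 hkd, mul_sub, mul_one, Finset.mul_sum]
      have hz : ∀ l ∈ Finset.Ico 1 k, a i m * (t l * star (t l)) = 0 := by
        intro l hl
        simp only [Finset.mem_Ico] at hl
        rw [← mul_assoc, (hV (i - m) i m (by omega) hmi hid rfl l hl.1 (by omega)).2, zero_mul]
      rw [Finset.sum_congr rfl hz, Finset.sum_const_zero, sub_zero]
  suffices key : ∀ p i j k, 1 ≤ k → k ≤ j → j < i → i ≤ d → j - k = p →
      star (a i k) * a j k = μ • (a j k * star (a i k)) by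
    intro i j k hk1 hkj hji hid
    exact key (j - k) i j k hk1 hkj hji hid rfl
  intro p
  induction p with
  | zero =>
      intro i j k hk1 hkj hji hid hp
      have hkj' : k = j := by omega
      subst hkj'
      -- Base case: k = j.  Write bb = a i (k+1).
      have hj1 : 1 ≤ k := hk1
      have hjd : k ≤ d := by omega
      have hji1 : k + 1 ≤ i := hji
      have hb := hV (i - (k+1)) i (k+1) (by omega) hji1 hid rfl k hj1 (by omega)
      have hbQ := hQa i (k+1) k hj1 (by omega) hji1 hid
      have hsb_t : star (a i (k+1)) * t k = 0 := by
        simpa [star_mul] using congrArg star hb.1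
      have hsbQ : star (a i (k+1)) * (star (t k) * t k) = star (a i (k+1)) := by
        have h := congrArg star hbQ.1
        rwa [star_mul, star_mul, star_star] at h
      have hccn : ∀ n : ℕ, (0:ℝ) ≤ ∑ m ∈ Finset.range n, μ ^ (2*m) := by
        intro n
        exact Finset.sum_nonneg (fun m _ => by rw [pow_mul]; exact pow_nonneg (sq_nonneg μ) m)
      -- eigenvector property
      have hEigsq : ∀ x : A, x * t k = 0 → x * (star (t k) * t k) = x → ∀ n,
          (x * (star (t k)) ^ n) * (T k * T k)
            = (∑ m ∈ Finset.range n, μ ^ (2*m)) • (x * (star (t k)) ^ n) := by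
        intro x hx1 hx2 n
        have hsum := (hTsq k hj1 hjd).mul_left (x * (star (t k)) ^ n)
        have hfun : (fun m => (x * (star (t k)) ^ n) * (μ ^ (2*m) • ((t k) ^ (m+1) * star ((t k) ^ (m+1)))))
            = fun m => if m + 1 ≤ n then μ ^ (2*m) • (x * (star (t k)) ^ n) else 0 := by
          funext m
          rw [mul_smul_comm, ← mul_assoc (x * (star (t k)) ^ n) ((t k)^(m+1)) (star ((t k)^(m+1)))]
          rw [powP (t k) x (hQt k hj1 hjd) hx1 hx2 (m+1) n]
          by_cases h : m + 1 ≤ n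
          · rw [if_pos h, if_pos h, star_pow, mul_assoc, ← pow_add]
            have he : n - (m+1) + (m+1) = n := by omega
            rw [he]
          · rw [if_neg h, if_neg h, zero_mul, smul_zero]
        rw [hfun] at hsum
        have h2 : HasSum (fun m => if m + 1 ≤ n then μ ^ (2*m) • (x * (star (t k)) ^ n) else 0)
            ((∑ m ∈ Finset.range n, μ ^ (2*m)) • (x * (star (t k)) ^ n)) := by
          have hvan : ∀ m ∉ Finset.range n,
              (if m + 1 ≤ n then μ ^ (2*m) • (x * (star (t k)) ^ n) else 0) = 0 := by
            intro m hm
            simp only [Finset.mem_range] at hm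
            rw [if_neg (by omega)]
          have h3 := hasSum_sum_of_ne_finset_zero (L := SummationFilter.unconditional ℕ) hvan
          convert h3 using 1
          rw [Finset.sum_congr rfl (fun m hm => if_pos (by
            simp only [Finset.mem_range] at hm; omega)), ← Finset.sum_smul]
        have h4 := hsum.unique h2
        rw [← pow_two]
        exact h4
      have hEig : ∀ x : A, x * t k = 0 → x * (star (t k) * t k) = x → ∀ n,
          (x * (star (t k)) ^ n) * T k
            = Real.sqrt (∑ m ∈ Finset.range n, μ ^ (2*m)) • (x * (star (t k)) ^ n) := by
        intro x hx1 hx2 n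
        exact eigen_aux (T k) (x * (star (t k)) ^ n) (hTpos k hj1 hjd) _ (Real.sqrt_nonneg _)
          (by rw [Real.sq_sqrt (hccn n)]; exact hEigsq x hx1 hx2 n)
      have hTsa : star (T k) = T k := IsSelfAdjoint.of_nonneg (hTpos k hj1 hjd)
      have hEigL : ∀ n, T k * ((t k)^(n+1) * star (a i (k+1)))
          = Real.sqrt (∑ m ∈ Finset.range (n+1), μ ^ (2*m)) • ((t k)^(n+1) * star (a i (k+1))) := by
        intro n
        have h := congrArg star (hEig (a i (k+1)) hb.2 hbQ.2 (n+1))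
        simp only [star_mul, star_smul, star_trivial, star_pow, star_star, hTsa] at h
        rw [← mul_assoc] at h ⊢
        exact h
      -- the series for star (a i k)
      have hsum_s := haij i k hj1 hji hid
      have hsum_star : HasSum (fun n => μ ^ n • ((t k) ^ n * star (a i (k+1)) * (star (t k)) ^ n))
          (star (a i k)) := by
        have h := hsum_s.star
        have heq : (fun n => star (μ ^ n • ((t k) ^ n * a i (k+1) * star ((t k) ^ n))))
            = fun n => μ ^ n • ((t k) ^ n * star (a i (k+1)) * (star (t k)) ^ n) := by
          funext n
          rw [star_smul, star_trivial, star_mul, star_star, star_mul, star_pow, mul_assoc]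
        rw [heq] at h
        exact h
      have h0sb : star (a i (k+1)) * T k = 0 := by
        have h := hEig (star (a i (k+1))) hsb_t hsbQ 0
        simpa using h
      have hP1 : ∀ n, (star (a i (k+1)) * (star (t k)) ^ n) * t k
          = if 1 ≤ n then star (a i (k+1)) * (star (t k)) ^ (n-1) else 0 := by
        intro n
        simpa using powP (t k) (star (a i (k+1))) (hQt k hj1 hjd) hsb_t hsbQ 1 n
      -- LHS series
      have hL := hsum_star.mul_right (T k * t k)
      have hGfun : (fun n => (μ ^ n • ((t k) ^ n * star (a i (k+1)) * (star (t k)) ^ n)) * (T k * t k))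
          = fun n => (μ ^ n * Real.sqrt (∑ m ∈ Finset.range n, μ ^ (2*m))) •
              ((t k) ^ n * (star (a i (k+1)) * (star (t k)) ^ (n - 1))) := by
        funext n
        rw [smul_mul_assoc, mul_assoc ((t k)^n) (star (a i (k+1))) ((star (t k))^n)]
        rw [← mul_assoc ((t k)^n * (star (a i (k+1)) * (star (t k))^n)) (T k) (t k)]
        rw [mul_assoc ((t k)^n) (star (a i (k+1)) * (star (t k))^n) (T k)]
        rw [hEig (star (a i (k+1))) hsb_t hsbQ n]
        rw [mul_smul_comm, smul_mul_assoc, smul_smul]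
        rw [mul_assoc ((t k)^n) (star (a i (k+1)) * (star (t k))^n) (t k)]
        rw [hP1 n]
        cases n with
        | zero =>
            simp
        | succ q =>
            rw [if_pos (by omega)]
      rw [hGfun] at hL
      have hG0 : ((fun n => (μ ^ n * Real.sqrt (∑ m ∈ Finset.range n, μ ^ (2*m))) •
          ((t k) ^ n * (star (a i (k+1)) * (star (t k)) ^ (n - 1)))) : ℕ → A) 0 = 0 := by
        simp
      have hL2 : HasSum (fun n => (μ ^ (n+1) * Real.sqrt (∑ m ∈ Finset.range (n+1), μ ^ (2*m))) •
          ((t k) ^ (n+1) * (star (a i (k+1)) * (star (t k)) ^ n)))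
          (star (a i k) * (T k * t k)) := by
        have h := (hasSum_nat_add_iff (f := fun n => (μ ^ n * Real.sqrt (∑ m ∈ Finset.range n, μ ^ (2*m))) •
          ((t k) ^ n * (star (a i (k+1)) * (star (t k)) ^ (n - 1)))) 1).mpr (by simpa [hG0] using hL)
        simpa only [Nat.add_sub_cancel] using h
      -- RHS series
      have hR := hsum_star.mul_left (T k * t k)
      have hHfun : (fun n => (T k * t k) * (μ ^ n • ((t k) ^ n * star (a i (k+1)) * (star (t k)) ^ n)))
          = fun n => (μ ^ n * Real.sqrt (∑ m ∈ Finset.range (n+1), μ ^ (2*m))) •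
              ((t k) ^ (n+1) * (star (a i (k+1)) * (star (t k)) ^ n)) := by
        funext n
        rw [mul_smul_comm, mul_assoc ((t k)^n) (star (a i (k+1))) ((star (t k))^n)]
        rw [← mul_assoc (T k * t k) ((t k)^n) (star (a i (k+1)) * (star (t k))^n)]
        rw [mul_assoc (T k) (t k) ((t k)^n), ← pow_succ']
        rw [← mul_assoc (T k * (t k)^(n+1)) (star (a i (k+1))) ((star (t k))^n)]
        rw [mul_assoc (T k) ((t k)^(n+1)) (star (a i (k+1)))]
        rw [hEigL n, smul_mul_assoc, smul_smul]
        rw [mul_assoc ((t k)^(n+1)) (star (a i (k+1))) ((star (t k))^n)]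
      rw [hHfun] at hR
      -- conclude
      have hshift : (fun n => (μ ^ (n+1) * Real.sqrt (∑ m ∈ Finset.range (n+1), μ ^ (2*m))) •
            ((t k) ^ (n+1) * (star (a i (k+1)) * (star (t k)) ^ n)))
          = fun n => μ • ((μ ^ n * Real.sqrt (∑ m ∈ Finset.range (n+1), μ ^ (2*m))) •
            ((t k) ^ (n+1) * (star (a i (k+1)) * (star (t k)) ^ n))) := by
        funext n
        rw [smul_smul, pow_succ' μ n, mul_assoc]
      rw [hshift] at hL2
      have hfin := hL2.unique (hR.const_smul μ)
      rw [haii k hj1 hjd]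
      exact hfin
  | succ p ih =>
      intro i j k hk1 hkj hji hid hp
      have hkj' : k < j := by omega
      have hjd : j ≤ d := by omega
      have hkd : k ≤ d := by omega
      have hIH := ih i j (k+1) (by omega) (by omega) hji hid (by omega)
      have hbi := hV (i - (k+1)) i (k+1) (by omega) (by omega) hid rfl k hk1 (by omega)
      have hbj := hV (j - (k+1)) j (k+1) (by omega) (by omega) hjd rfl k hk1 (by omega)
      have hbiQ := hQa i (k+1) k hk1 (by omega) (by omega) hid
      have hbjQ := hQa j (k+1) k hk1 (by omega) (by omega) hjd
      have hsbi_t : star (a i (k+1)) * t k = 0 := by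
        simpa [star_mul] using congrArg star hbi.1
      have hsbiQ : star (a i (k+1)) * (star (t k) * t k) = star (a i (k+1)) := by
        have h := congrArg star hbiQ.1
        rwa [star_mul, star_mul, star_star] at h
      have hst_sbi : star (t k) * star (a i (k+1)) = 0 := by
        simpa [star_mul] using congrArg star hbi.2
      have hsum_i := haij i k hk1 (by omega) hid
      have hsum_j := haij j k hk1 hkj' hjd
      have hstar_term : ∀ (l : ℕ) (c : A), star (μ ^ l • ((t k) ^ l * c * star ((t k) ^ l)))
          = μ ^ l • ((t k) ^ l * star c * (star (t k)) ^ l) := by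
        intro l c
        rw [star_smul, star_trivial, star_mul, star_star, star_mul, star_pow, mul_assoc]
      -- first diagonal sum : star (a i k) * a j k
      have hC : HasSum (fun n => (μ^n * μ^n) •
            ((t k)^n * (star (a i (k+1)) * a j (k+1)) * (star (t k))^n))
          (star (a i k) * a j k) := by
        apply diagSum hsum_i hsum_j
        intro n m
        rw [hstar_term n (a i (k+1))]
        rw [show star ((t k) ^ m) = (star (t k)) ^ m from star_pow _ _]
        rw [smul_mul_smul_comm]
        rw [crossO (t k) (star (a i (k+1))) (a j (k+1)) (hQt k hk1 hkd) hsbi_t hsbiQ hbj.1 n m]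
        by_cases h : n = m
        · subst h
          rw [if_pos rfl, if_pos rfl]
        · rw [if_neg h, if_neg h, smul_zero]
      -- second diagonal sum : a j k * star (a i k)
      have hC' : HasSum (fun n => (μ^n * μ^n) •
            ((t k)^n * (a j (k+1) * star (a i (k+1))) * (star (t k))^n))
          (a j k * star (a i k)) := by
        have h := diagSum hsum_j.star hsum_i.star (C := fun n => (μ^n * μ^n) •
            ((t k)^n * (a j (k+1) * star (a i (k+1))) * (star (t k))^n)) ?_
        · rwa [star_star] at h
        intro n m
        rw [star_star]
        rw [hstar_term m (a i (k+1))]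
        rw [show star ((t k) ^ n) = (star (t k)) ^ n from star_pow _ _]
        rw [smul_mul_smul_comm]
        rw [crossO (t k) (a j (k+1)) (star (a i (k+1))) (hQt k hk1 hkd) hbj.2 hbjQ.2 hst_sbi n m]
        by_cases h : n = m
        · subst h
          rw [if_pos rfl, if_pos rfl]
        · rw [if_neg h, if_neg h, smul_zero]
      have hCC' : (fun n => (μ^n * μ^n) •
            ((t k)^n * (star (a i (k+1)) * a j (k+1)) * (star (t k))^n))
          = fun n => μ • ((μ^n * μ^n) •
            ((t k)^n * (a j (k+1) * star (a i (k+1))) * (star (t k))^n)) := by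
        funext n
        rw [hIH, mul_smul_comm, smul_mul_assoc, smul_comm]
      rw [hCC'] at hC
      exact hC.unique (hC'.const_smul μ)
end

section
/- Let A be a unital C*-algebra, μ ∈ (−1,1) a real number, and S, a ∈ A with ‖S‖ ≤ 1 and S^* a = μ a S^*. Then the series ∑_{n=0}^∞ μ^n S^n (1 − S S^*) a S^{*n} converges in the norm of A and its sum equals a. -/
/-!
Since `S* a = μ a S*`, the `n`-th term is `bₙ - bₙ₊₁` with `bₙ = μⁿ Sⁿ a S*ⁿ`. As `‖S‖ ≤ 1` and
`|μ| < 1`, `‖bₙ‖ ≤ |μ|ⁿ ‖a‖`, so `b` is summable and the series telescopes to `b₀ = a`.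
-/

theorem HasSum.sub_succ {G : Type*} [AddCommGroup G] [TopologicalSpace G]
    [IsTopologicalAddGroup G] {b : ℕ → G} {s : G} (h : HasSum b s) :
    HasSum (fun n => b n - b (n + 1)) (b 0) := by
  have h_succ : HasSum (fun n => b (n + 1)) (s - b 0) := by
    simpa using (hasSum_nat_add_iff' 1).mpr h
  simpa using h.sub h_succ

theorem pow_smul_mul_one_sub_mul_eq_sub {R A : Type*} [CommSemiring R] [Ring A] [Algebra R A]
    {μ : R} {S T a : A} (h : T * a = μ • (a * T)) (n : ℕ) :
    μ ^ n • (S ^ n * (1 - S * T) * a * T ^ n) =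
      μ ^ n • (S ^ n * a * T ^ n) - μ ^ (n + 1) • (S ^ (n + 1) * a * T ^ (n + 1)) := by
  have h_expand : S ^ n * (1 - S * T) * a * T ^ n =
      S ^ n * a * T ^ n - S ^ (n + 1) * (T * a) * T ^ n := by
    noncomm_ring
  rw [h_expand, h, mul_smul_comm, smul_mul_assoc, smul_sub, smul_smul, ← pow_succ, pow_succ' T]
  noncomm_ring

section NormLeOne

variable {A : Type*} [SeminormedRing A] {S T : A}

theorem norm_pow_mul_le_of_norm_le_one (hS : ‖S‖ ≤ 1) (x : A) (n : ℕ) : ‖S ^ n * x‖ ≤ ‖x‖ := by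
  induction n with
  | zero => simp
  | succ n ih =>
    rw [pow_succ', mul_assoc]
    exact (norm_mul_le _ _).trans (mul_le_of_le_one_left (norm_nonneg _) hS |>.trans ih)

theorem norm_mul_pow_le_of_norm_le_one (hT : ‖T‖ ≤ 1) (x : A) (n : ℕ) : ‖x * T ^ n‖ ≤ ‖x‖ := by
  induction n with
  | zero => simp
  | succ n ih =>
    rw [pow_succ, ← mul_assoc]
    exact (norm_mul_le _ _).trans (mul_le_of_le_one_right (norm_nonneg _) hT |>.trans ih)

theorem norm_pow_mul_mul_pow_le_of_norm_le_one (hS : ‖S‖ ≤ 1) (hT : ‖T‖ ≤ 1) (x : A) (n : ℕ) :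
    ‖S ^ n * x * T ^ n‖ ≤ ‖x‖ :=
  (norm_mul_pow_le_of_norm_le_one hT _ n).trans (norm_pow_mul_le_of_norm_le_one hS x n)

end NormLeOne

theorem summable_pow_smul_pow_mul_mul_pow {A : Type*} [NormedRing A] [NormedAlgebra ℝ A]
    [CompleteSpace A] {μ : ℝ} (hμ : |μ| < 1) {S T : A} (hS : ‖S‖ ≤ 1) (hT : ‖T‖ ≤ 1) (a : A) :
    Summable fun n : ℕ => μ ^ n • (S ^ n * a * T ^ n) := by
  refine .of_norm_bounded ((summable_geometric_of_lt_one (abs_nonneg μ) hμ).mul_left ‖a‖)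
    fun n => ?_
  rw [norm_smul, Real.norm_eq_abs, abs_pow, mul_comm]
  exact mul_le_mul_of_nonneg_right (norm_pow_mul_mul_pow_le_of_norm_le_one hS hT a n)
    (by positivity)

/-- Let `A` be a unital C*-algebra, `μ ∈ (-1,1)`, and `S, a ∈ A` with
`‖S‖ ≤ 1` and `S* a = μ a S*`. Then `∑_{n=0}^∞ μⁿ Sⁿ (1 - S S*) a S*ⁿ` converges in norm
and its sum equals `a`. -/
theorem hasSum_shift_decomposition {A : Type*} [CStarAlgebra A]
    {μ : ℝ} (hμ₁ : -1 < μ) (hμ₂ : μ < 1) (S a : A)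
    (hS : ‖S‖ ≤ 1) (hcomm : star S * a = μ • (a * star S)) :
    HasSum (fun n : ℕ => μ ^ n • (S ^ n * (1 - S * star S) * a * (star S) ^ n)) a := by
  have hS_star : ‖star S‖ ≤ 1 := by rwa [norm_star]
  have h_summable := summable_pow_smul_pow_mul_mul_pow (abs_lt.mpr ⟨hμ₁, hμ₂⟩) hS hS_star a
  simpa [pow_smul_mul_one_sub_mul_eq_sub hcomm] using h_summable.hasSum.sub_succ
end

section
/- (Proposition 1) With the above polar decomposition data, the following hold: S is an isometry, i.e. S^* S = 1; the series ∑_{n=1}^∞ q^{n−1} S^n S^{*n} converges in operator norm and its sum equals a a^*; and a = (∑_{n=1}^∞ q^{n−1} S^n S^{*n})^{1/2} S, where the square root is the nonnegative square root of the nonnegative operator ∑_{n=1}^∞ q^{n−1} S^n S^{*n}. -/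
/-!
Write `C = (a a*)^{1/2}`, so that `a = C S`. The relation `a* a = 1 + q a a*` reads
`‖a x‖² = ‖x‖² + q ‖a* x‖²`, which makes `a`, hence `S`, injective; an injective partial isometry
is an isometry. Then `1 - S S*` projects onto `ker S* = ker a* = ker C`, so `S S* C = C`, i.e.
`S a* = C`, and `a a* = C² = S (a* a) S* = S S* + q S (a a*) S*`. Iterating this identity `n` times
leaves the remainder `qⁿ Sⁿ (a a*) S*ⁿ`, of norm at most `|q|ⁿ ‖a a*‖` since `‖S‖ ≤ 1`.
-/

open Filter Topology

section Algebra

variable {A : Type*} [Ring A] [Algebra ℝ A]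

lemma eq_sum_range_add_smul_of_eq_add_smul {s r t : A} {q : ℝ}
    (ht : t = s * r + q • (s * t * r)) (n : ℕ) :
    t = ∑ k ∈ Finset.range n, q ^ k • (s ^ (k + 1) * r ^ (k + 1)) +
      q ^ n • (s ^ n * t * r ^ n) := by
  induction n with
  | zero => simp
  | succ n ih =>
    have hstep : s ^ n * t * r ^ n =
        s ^ (n + 1) * r ^ (n + 1) + q • (s ^ (n + 1) * t * r ^ (n + 1)) := by
      conv_lhs => rw [ht]
      rw [pow_succ s, pow_succ' r]
      simp only [mul_add, add_mul, mul_smul_comm, smul_mul_assoc, mul_assoc]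
    conv_lhs => rw [ih]
    rw [hstep, smul_add, smul_smul, ← pow_succ, Finset.sum_range_succ, add_assoc]

end Algebra

section NormedAlgebra

variable {A : Type*} [NormedRing A]

lemma norm_pow_mul_mul_pow_le {s r : A} (hs : ‖s‖ ≤ 1) (hr : ‖r‖ ≤ 1) (x : A) (n : ℕ) :
    ‖s ^ n * x * r ^ n‖ ≤ ‖x‖ := by
  induction n with
  | zero => simp
  | succ n ih =>
    calc ‖s ^ (n + 1) * x * r ^ (n + 1)‖ = ‖s * (s ^ n * x * r ^ n) * r‖ := by
          rw [pow_succ' s, pow_succ r]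
          simp only [mul_assoc]
      _ ≤ ‖s‖ * ‖s ^ n * x * r ^ n‖ * ‖r‖ := norm_mul₃_le
      _ ≤ 1 * ‖x‖ * 1 := by gcongr
      _ = ‖x‖ := by ring

variable [NormedAlgebra ℝ A]

lemma hasSum_of_eq_add_smul {s r t : A} {q : ℝ} (hq : |q| < 1) (hs : ‖s‖ ≤ 1) (hr : ‖r‖ ≤ 1)
    (ht : t = s * r + q • (s * t * r)) :
    HasSum (fun n : ℕ => q ^ n • (s ^ (n + 1) * r ^ (n + 1))) t := by
  have hgeom : Tendsto (fun n : ℕ => |q| ^ n) atTop (𝓝 0) :=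
    tendsto_pow_atTop_nhds_zero_of_lt_one (abs_nonneg q) hq
  have hnorm (x : A) (n : ℕ) : ‖q ^ n • (s ^ n * x * r ^ n)‖ ≤ |q| ^ n * ‖x‖ := by
    rw [norm_smul, norm_pow, Real.norm_eq_abs]
    gcongr
    exact norm_pow_mul_mul_pow_le hs hr x n
  have hterm (n : ℕ) : q ^ n • (s ^ (n + 1) * r ^ (n + 1)) = q ^ n • (s ^ n * (s * r) * r ^ n) := by
    rw [pow_succ s, pow_succ' r]
    simp only [mul_assoc]
  rw [hasSum_iff_tendsto_nat_of_summable_norm, tendsto_iff_norm_sub_tendsto_zero]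
  · refine squeeze_zero (fun _ => norm_nonneg _) (fun n => ?_) (by simpa using hgeom.mul_const ‖t‖)
    rw [norm_sub_rev, sub_eq_of_eq_add' (eq_sum_range_add_smul_of_eq_add_smul ht n)]
    exact hnorm t n
  · refine .of_nonneg_of_le (fun _ => norm_nonneg _) (fun n => ?_)
      ((summable_geometric_of_lt_one (abs_nonneg q) hq).mul_right ‖s * r‖)
    rw [hterm]
    exact hnorm (s * r) n

end NormedAlgebra

section HilbertSpace

variable {H : Type*} [NormedAddCommGroup H] [InnerProductSpace ℂ H] [CompleteSpace H]

lemma norm_apply_eq_of_star_mul_self_eq {b c : H →L[ℂ] H} (h : star c * c = star b * b) (x : H) :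
    ‖c x‖ = ‖b x‖ := by
  have hsq : ‖c x‖ ^ 2 = ‖b x‖ ^ 2 := by
    rw [c.apply_norm_sq_eq_inner_adjoint_left, b.apply_norm_sq_eq_inner_adjoint_left,
      ← ContinuousLinearMap.star_eq_adjoint, ← ContinuousLinearMap.star_eq_adjoint]
    exact congrArg (fun T : H →L[ℂ] H => RCLike.re (inner ℂ (T x) x)) h
  exact (pow_left_inj₀ (norm_nonneg _) (norm_nonneg _) two_ne_zero).1 hsq

lemma norm_sqrt_mul_star_apply (a : H →L[ℂ] H) (x : H) :
    ‖CFC.sqrt (a * star a) x‖ = ‖star a x‖ := by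
  refine norm_apply_eq_of_star_mul_self_eq ?_ x
  rw [(IsSelfAdjoint.of_nonneg (CFC.sqrt_nonneg _)).star_eq, star_star,
    CFC.sqrt_mul_sqrt_self _ (mul_star_self_nonneg a)]

lemma norm_apply_sq_of_qCCR {q : ℝ} {a : H →L[ℂ] H}
    (hccr : star a * a = 1 + q • (a * star a)) (x : H) :
    ‖a x‖ ^ 2 = ‖x‖ ^ 2 + q * ‖star a x‖ ^ 2 := by
  rw [a.apply_norm_sq_eq_inner_adjoint_left, (star a).apply_norm_sq_eq_inner_adjoint_left,
    ← ContinuousLinearMap.star_eq_adjoint, ← ContinuousLinearMap.star_eq_adjoint, star_star]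
  change RCLike.re (inner ℂ ((star a * a) x) x) = _
  rw [hccr]
  simp [inner_self_eq_norm_sq_to_K, ← Complex.ofReal_pow]

lemma injective_of_qCCR {q : ℝ} (hq : -1 < q) {a : H →L[ℂ] H}
    (hccr : star a * a = 1 + q • (a * star a)) : Function.Injective a := by
  have hnorm := norm_apply_sq_of_qCCR hccr
  refine (injective_iff_map_eq_zero a).2 fun x hx => norm_eq_zero.1 ?_
  have hx0 : 0 = ‖x‖ ^ 2 + q * ‖star a x‖ ^ 2 := by simpa [hx] using hnorm x
  suffices ‖x‖ ^ 2 ≤ 0 from pow_eq_zero_iff two_ne_zero |>.1 (le_antisymm this (sq_nonneg _))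
  rcases le_or_gt 0 q with hq0 | hq0
  · nlinarith [sq_nonneg ‖star a x‖]
  · have ha : ‖a‖ ≤ 1 := ContinuousLinearMap.opNorm_le_bound _ zero_le_one fun y => by
      rw [one_mul, ← pow_le_pow_iff_left₀ (norm_nonneg _) (norm_nonneg _) two_ne_zero, hnorm y]
      nlinarith [sq_nonneg ‖star a y‖]
    have hstar : ‖star a x‖ ^ 2 ≤ ‖x‖ ^ 2 := by
      gcongr
      calc ‖star a x‖ ≤ ‖star a‖ * ‖x‖ := (star a).le_opNorm x
        _ ≤ 1 * ‖x‖ := by rw [norm_star]; gcongr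
        _ = ‖x‖ := one_mul _
    nlinarith

lemma star_mul_self_eq_one_of_injective {S : H →L[ℂ] H} (hS : S * star S * S = S)
    (hinj : Function.Injective S) : star S * S = 1 := by
  ext x
  exact hinj (by simpa [mul_assoc] using congr($hS x))

lemma norm_le_one_of_star_mul_self_eq_one {S : H →L[ℂ] H} (hS : star S * S = 1) : ‖S‖ ≤ 1 :=
  ContinuousLinearMap.opNorm_le_bound _ zero_le_one fun x => by
    rw [one_mul, (S.norm_map_iff_adjoint_comp_self).2 hS x]

lemma mul_star_eq_sqrt_of_polar {a S : H →L[ℂ] H} (hS : star S * S = 1)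
    (hpolar : star a = star S * CFC.sqrt (a * star a))
    (hker : LinearMap.ker ((star S : H →L[ℂ] H) : H →ₗ[ℂ] H) ≤
      LinearMap.ker ((star a : H →L[ℂ] H) : H →ₗ[ℂ] H)) :
    S * star a = CFC.sqrt (a * star a) := by
  have hC : IsSelfAdjoint (CFC.sqrt (a * star a)) := .of_nonneg (CFC.sqrt_nonneg _)
  -- `1 - S S*` maps into `ker S* ⊆ ker a* = ker C`
  have hCSS : CFC.sqrt (a * star a) * (S * star S) = CFC.sqrt (a * star a) := by
    ext x
    have hSSS : star S (S (star S x)) = star S x := by simpa using congr($hS (star S x))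
    have hmem : star a (S (star S x) - x) = 0 :=
      hker (show star S (S (star S x) - x) = 0 by rw [map_sub, hSSS, sub_self])
    have hC0 := norm_sqrt_mul_star_apply a (S (star S x) - x)
    rwa [hmem, norm_zero, norm_eq_zero, map_sub, sub_eq_zero] at hC0
  calc S * star a = S * star S * CFC.sqrt (a * star a) := by rw [mul_assoc, ← hpolar]
    _ = star (CFC.sqrt (a * star a) * (S * star S)) := by
        rw [star_mul, star_mul, star_star, hC.star_eq]
    _ = CFC.sqrt (a * star a) := by rw [hCSS, hC.star_eq]

end HilbertSpace

/-- **Proposition 1.** Let `H` be a complex Hilbert space, `q ∈ (-1,1)`,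
and `a` a bounded operator on `H` with `a* a = 1 + q a a*`. Let `C = (a a*)^{1/2}` and let
`S` be a partial isometry with `a* = S* C` and `ker S* = ker a*` (polar decomposition).
Then `S` is an isometry (`S* S = 1`), the series `∑_{n=1}^∞ q^{n-1} Sⁿ S*ⁿ` converges in
operator norm with sum `a a*`, and `a = (∑_{n=1}^∞ q^{n-1} Sⁿ S*ⁿ)^{1/2} S`. -/
theorem polar_isometry_of_qCCR {H : Type*} [NormedAddCommGroup H]
    [InnerProductSpace ℂ H] [CompleteSpace H]
    {q : ℝ} (hq₁ : -1 < q) (hq₂ : q < 1) (a S : H →L[ℂ] H)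
    (hccr : star a * a = 1 + q • (a * star a))
    (hSpi : S * star S * S = S)
    (hpolar : star a = star S * CFC.sqrt (a * star a))
    (hker : LinearMap.ker ((star S : H →L[ℂ] H) : H →ₗ[ℂ] H) =
      LinearMap.ker ((star a : H →L[ℂ] H) : H →ₗ[ℂ] H)) :
    star S * S = 1 ∧
    HasSum (fun n : ℕ => q ^ n • (S ^ (n + 1) * (star S) ^ (n + 1))) (a * star a) ∧
    a = CFC.sqrt (a * star a) * S := by
  have hC : IsSelfAdjoint (CFC.sqrt (a * star a)) := .of_nonneg (CFC.sqrt_nonneg _)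
  have ha : a = CFC.sqrt (a * star a) * S := by
    simpa only [star_star, star_mul, hC.star_eq] using congrArg star hpolar
  have hSinj : Function.Injective S := fun x y hxy => injective_of_qCCR hq₁ hccr <| by
    rw [ha]
    exact congrArg (CFC.sqrt (a * star a) : H →L[ℂ] H) hxy
  have hS : star S * S = 1 := star_mul_self_eq_one_of_injective hSpi hSinj
  have hSa : S * star a = CFC.sqrt (a * star a) := mul_star_eq_sqrt_of_polar hS hpolar hker.le
  have hrec : a * star a = S * star S + q • (S * (a * star a) * star S) :=
    calc a * star a = S * star a * star (S * star a) := by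
          rw [hSa, hC.star_eq, CFC.sqrt_mul_sqrt_self _ (mul_star_self_nonneg a)]
      _ = S * (star a * a) * star S := by simp only [star_mul, star_star, mul_assoc]
      _ = S * star S + q • (S * (a * star a) * star S) := by
          rw [hccr, mul_add, add_mul, mul_one, mul_smul_comm, smul_mul_assoc]
  have hSnorm : ‖S‖ ≤ 1 := norm_le_one_of_star_mul_self_eq_one hS
  exact ⟨hS, hasSum_of_eq_add_smul (abs_lt.2 ⟨hq₁, hq₂⟩) hSnorm (by rwa [norm_star]) hrec, ha⟩
end

section
/- (Proposition 1, membership part) With the above polar decomposition data, the partial isometry S belongs to the norm-closure of the unital star-subalgebra of bounded operators on H generated by a; in particular S lies in the C*-algebra generated by a and a^*. -/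
/-!
Write `x = a a*`. Since `a* a = 1 + q x` and `a a*`, `a* a` have the same nonzero spectrum, every
nonzero `t ∈ σ(x)` has the form `1 + q s` with `s ∈ σ(x)`, `s ≥ 0`; iterating once shows that
the nonzero spectrum of `x` is bounded below by `δ = min 1 (1 + q) > 0`. With this gap,
`e = f(x)` for `f t = t / max t δ` is the range projection of `x^{1/2}`, and the kernel condition
gives `e S = S`. Hence `S = e S = m(x) x^{1/2} S = m(x) a` with `m t = √t / max t δ` continuous,
so `S` lies in the closed `*`-algebra generated by `a`.
-/

section Spectrum

variable {A : Type*} [Ring A] [Algebra ℝ A]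

lemma exists_mem_spectrum_eq_one_add_mul_of_mul_eq {a b : A} {q t : ℝ}
    (h : b * a = 1 + q • (a * b)) (ht : t ∈ spectrum ℝ (a * b)) (ht0 : t ≠ 0) :
    ∃ s ∈ spectrum ℝ (a * b), t = 1 + q * s := by
  have : Nontrivial A :=
    not_subsingleton_iff_nontrivial.mp fun _ ↦ by simp [spectrum.of_subsingleton] at ht
  have hba : t ∈ spectrum ℝ (b * a) := by
    have : t ∈ spectrum ℝ (a * b) \ {0} := ⟨ht, ht0⟩
    rw [spectrum.nonzero_mul_comm] at this
    exact this.1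
  rw [h, ← map_one (algebraMap ℝ A), ← sub_add_cancel t 1, spectrum.add_mem_add_iff,
    spectrum.smul_eq_smul _ _ ⟨t, ht⟩] at hba
  obtain ⟨s, hs, hst⟩ := hba
  exact ⟨s, hs, by simp only [smul_eq_mul] at hst; linarith⟩

end Spectrum

section CStarAlgebra

variable {A : Type*} [CStarAlgebra A] [PartialOrder A] [StarOrderedRing A]

lemma min_one_one_add_le_of_mem_spectrum {a : A} {q t : ℝ}
    (h : star a * a = 1 + q • (a * star a)) (ht : t ∈ spectrum ℝ (a * star a)) (ht0 : t ≠ 0) :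
    min 1 (1 + q) ≤ t := by
  have hnonneg : ∀ s ∈ spectrum ℝ (a * star a), 0 ≤ s :=
    fun s hs ↦ spectrum_nonneg_of_nonneg (mul_star_self_nonneg a) hs
  obtain ⟨s, hs, rfl⟩ := exists_mem_spectrum_eq_one_add_mul_of_mul_eq h ht ht0
  have hs0 := hnonneg s hs
  rcases le_or_gt 0 q with hq | hq
  · exact min_le_of_left_le (by nlinarith)
  rcases eq_or_ne s 0 with rfl | hs_ne
  · simp
  -- for `q < 0` every nonzero spectral value `1 + q r` is at most `1`
  obtain ⟨r, hr, rfl⟩ := exists_mem_spectrum_eq_one_add_mul_of_mul_eq h hs hs_ne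
  have hr0 := hnonneg r hr
  exact min_le_of_right_le (by nlinarith [mul_nonneg (mul_self_nonneg q) hr0])

variable {x : A} {δ : ℝ}

lemma cfc_sqrt_div_max_mul_sqrt (hx : 0 ≤ x) (hδ : 0 < δ) :
    cfc (fun t ↦ √t / max t δ) x * CFC.sqrt x = cfc (fun t ↦ t / max t δ) x := by
  have hmax : ∀ t, max t δ ≠ 0 := fun t ↦ (hδ.trans_le (le_max_right t δ)).ne'
  rw [CFC.sqrt_eq_real_sqrt x hx, cfcₙ_eq_cfc, ← cfc_mul (fun t ↦ √t / max t δ) Real.sqrt x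
    (Continuous.div (by fun_prop) (by fun_prop) hmax).continuousOn]
  refine cfc_congr fun t ht ↦ ?_
  rw [div_mul_eq_mul_div, Real.mul_self_sqrt (spectrum_nonneg_of_nonneg hx ht)]

lemma sqrt_mul_cfc_div_max (hx : 0 ≤ x) (hδ : 0 < δ)
    (hgap : ∀ t ∈ spectrum ℝ x, t ≠ 0 → δ ≤ t) :
    CFC.sqrt x * cfc (fun t ↦ t / max t δ) x = CFC.sqrt x := by
  have hmax : ∀ t, max t δ ≠ 0 := fun t ↦ (hδ.trans_le (le_max_right t δ)).ne'
  rw [CFC.sqrt_eq_real_sqrt x hx, cfcₙ_eq_cfc, ← cfc_mul Real.sqrt (fun t ↦ t / max t δ) x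
    Real.continuous_sqrt.continuousOn
    (Continuous.div (by fun_prop) (by fun_prop) hmax).continuousOn]
  refine cfc_congr fun t ht ↦ ?_
  rcases eq_or_ne t 0 with rfl | ht0
  · simp
  · rw [max_eq_left (hgap t ht ht0), div_self ht0, mul_one]

lemma eq_cfc_mul_of_star_eq_star_mul_sqrt {a S : A} (hδ : 0 < δ)
    (hgap : ∀ t ∈ spectrum ℝ (a * star a), t ≠ 0 → δ ≤ t)
    (hpolar : star a = star S * CFC.sqrt (a * star a))
    (hann : ∀ y, star a * y = 0 → star S * y = 0) :
    S = cfc (fun t ↦ √t / max t δ) (a * star a) * a := by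
  have hx := mul_star_self_nonneg a
  set e := cfc (fun t ↦ t / max t δ) (a * star a)
  have hSe : star S * (1 - e) = 0 := hann _ <| by
    rw [hpolar, mul_assoc, mul_sub, mul_one, sqrt_mul_cfc_div_max hx hδ hgap, sub_self, mul_zero]
  have heS : e * S = S := by
    have := congrArg star hSe
    rw [star_mul, star_sub, star_one, (cfc_predicate _ _ : IsSelfAdjoint e).star_eq, star_star,
      star_zero, sub_mul, one_mul, sub_eq_zero] at this
    exact this.symm
  have ha := congrArg star hpolar
  rw [star_star, star_mul, star_star, (CFC.sqrt_nonneg _).isSelfAdjoint.star_eq] at ha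
  calc S = e * S := heS.symm
    _ = cfc (fun t ↦ √t / max t δ) (a * star a) * CFC.sqrt (a * star a) * S := by
      rw [cfc_sqrt_div_max_mul_sqrt hx hδ]
    _ = cfc (fun t ↦ √t / max t δ) (a * star a) * a := by rw [mul_assoc, ← ha]

end CStarAlgebra

lemma ContinuousLinearMap.mul_eq_zero_of_ker_le {𝕜 E : Type*} [RCLike 𝕜] [NormedAddCommGroup E]
    [NormedSpace 𝕜 E] {f g h : E →L[𝕜] E} (hker : (f : E →ₗ[𝕜] E).ker ≤ (g : E →ₗ[𝕜] E).ker)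
    (hfh : f * h = 0) : g * h = 0 := by
  ext v
  exact hker (congr($hfh v) : f (h v) = 0)

theorem polar_partialIsometry_mem_closure_general {H : Type*} [NormedAddCommGroup H]
    [InnerProductSpace ℂ H] [CompleteSpace H]
    {q : ℝ} (hq₁ : -1 < q) (a S : H →L[ℂ] H)
    (hccr : star a * a = 1 + q • (a * star a))
    (hpolar : star a = star S * CFC.sqrt (a * star a))
    (hker : LinearMap.ker ((star S : H →L[ℂ] H) : H →ₗ[ℂ] H) = LinearMap.ker ((star a : H →L[ℂ] H) : H →ₗ[ℂ] H)) :
    S ∈ (StarAlgebra.adjoin ℂ ({a} : Set (H →L[ℂ] H))).topologicalClosure := by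
  set B := StarAlgebra.adjoin ℂ ({a} : Set (H →L[ℂ] H))
  have ha : a ∈ B.topologicalClosure :=
    B.le_topologicalClosure (StarAlgebra.self_mem_adjoin_singleton ℂ a)
  rw [eq_cfc_mul_of_star_eq_star_mul_sqrt (δ := min 1 (1 + q)) (lt_min one_pos (by linarith))
    (fun t ↦ min_one_one_add_le_of_mem_spectrum hccr) hpolar
    (fun y ↦ ContinuousLinearMap.mul_eq_zero_of_ker_le hker.ge)]
  exact mul_mem (cfc_mem (hs := B.isClosed_topologicalClosure) _ (mul_mem ha (star_mem ha))) ha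

set_option synthInstance.maxHeartbeats 1000000 in
/-- **Proposition 1, membership part.** With the polar decomposition data
`a* = S* C`, `C = (a a*)^{1/2}`, `ker S* = ker a*`, for `a` satisfying `a* a = 1 + q a a*`
with `q ∈ (-1,1)`, the partial isometry `S` belongs to the norm-closure of the unital
star-subalgebra of bounded operators generated by `a`; in particular `S` lies in the
C*-algebra generated by `a` and `a*`. -/
theorem polar_partialIsometry_mem_closure {H : Type*} [NormedAddCommGroup H]
    [InnerProductSpace ℂ H] [CompleteSpace H]
    {q : ℝ} (hq₁ : -1 < q) (hq₂ : q < 1) (a S : H →L[ℂ] H)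
    (hccr : star a * a = 1 + q • (a * star a))
    (hSpi : S * star S * S = S)
    (hpolar : star a = star S * CFC.sqrt (a * star a))
    (hker : LinearMap.ker ((star S : H →L[ℂ] H) : H →ₗ[ℂ] H) = LinearMap.ker ((star a : H →L[ℂ] H) : H →ₗ[ℂ] H)) :
    S ∈ (StarAlgebra.adjoin ℂ ({a} : Set (H →L[ℂ] H))).topologicalClosure :=
  polar_partialIsometry_mem_closure_general hq₁ a S hccr hpolar hker
end
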